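/- arXiv:2506.17764 — 9 statements merged into one kernel-verified Lean document; each statement's English description precedes it below -/
import Mathlib

section
/- Let C_1, ..., C_K (K ≥ 2) be random subsets of Θ, each satisfying P(θ_* ∈ C_k) ≥ 1−γ for a fixed θ_* ∈ Θ and γ ∈ (0,1). Then for any threshold τ ∈ [0,1), the majority-vote set C^τ = {θ ∈ Θ : (1/K) Σ_{k=1}^K 𝟙(θ ∈ C_k) > τ} satisfies P(θ_* ∈ C^τ) ≥ 1 − γ/(1−τ). -/
open MeasureTheory ProbabilityTheory

open Classical in
/-- Real-valued indicator of a proposition. -/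
noncomputable def ind (p : Prop) : ℝ := if p then 1 else 0

/-- **Coverage of the majority-vote set.** If each random set `C k` contains `θ⋆` with
probability at least `1 − γ`, then the majority-vote set with threshold `τ ∈ [0,1)` contains
`θ⋆` with probability at least `1 − γ/(1 − τ)`. -/
theorem majority_vote_coverage
    {Ω Θ : Type*} [MeasurableSpace Ω] (P : Measure Ω) [IsProbabilityMeasure P]
    (K : ℕ) (hK : 2 ≤ K) (C : Fin K → Ω → Set Θ) (θstar : Θ)
    (γ : ℝ) (hγ : γ ∈ Set.Ioo (0 : ℝ) 1)
    (hmeas : ∀ k, MeasurableSet {ω | θstar ∈ C k ω})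
    (hcov : ∀ k, 1 - γ ≤ (P {ω | θstar ∈ C k ω}).toReal)
    (τ : ℝ) (hτ : τ ∈ Set.Ico (0 : ℝ) 1) :
    1 - γ / (1 - τ) ≤
      (P {ω | (1 / K : ℝ) * ∑ k, ind (θstar ∈ C k ω) > τ}).toReal := by
  classical
  set S : Fin K → Set Ω := fun k => {ω | θstar ∈ C k ω} with hS
  have hKpos : (0:ℝ) < K := by
    have : (0:ℕ) < K := by omega
    exact_mod_cast this
  set X : Ω → ℝ := fun ω => (1 / K : ℝ) * ∑ k, ind (θstar ∈ C k ω) with hX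
  have hind : ∀ k, (fun ω => ind (θstar ∈ C k ω)) = (S k).indicator (fun _ => (1:ℝ)) := by
    intro k
    funext ω
    simp [ind, Set.indicator, hS, Set.mem_setOf_eq]
  have hfint : ∀ k, Integrable (fun ω => ind (θstar ∈ C k ω)) P := by
    intro k
    rw [hind k]
    exact (integrable_const (1:ℝ)).indicator (hmeas k)
  have hfintg : ∀ k, ∫ ω, ind (θstar ∈ C k ω) ∂P = (P (S k)).toReal := by
    intro k
    rw [hind k, integral_indicator_const (1:ℝ) (hmeas k)]
    simp [measureReal_def, hS]
  have hXint : Integrable X P :=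
    (integrable_finset_sum _ (fun k _ => hfint k)).const_mul _
  have hXm : Measurable X := by
    apply Measurable.const_mul
    apply Finset.measurable_sum
    intro k _
    rw [hind k]
    exact measurable_const.indicator (hmeas k)
  -- bounds on X
  have hX01 : ∀ ω, 0 ≤ X ω ∧ X ω ≤ 1 := by
    intro ω
    have h0 : ∀ k : Fin K, 0 ≤ ind (θstar ∈ C k ω) := by
      intro k; unfold ind; split <;> norm_num
    have h1 : ∀ k : Fin K, ind (θstar ∈ C k ω) ≤ 1 := by
      intro k; unfold ind; split <;> norm_num
    constructor
    · apply mul_nonneg (by positivity)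
      exact Finset.sum_nonneg fun k _ => h0 k
    · have hsum : ∑ k, ind (θstar ∈ C k ω) ≤ (K : ℝ) := by
        calc ∑ k, ind (θstar ∈ C k ω) ≤ ∑ _k : Fin K, (1:ℝ) :=
          Finset.sum_le_sum fun k _ => h1 k
        _ = K := by simp
      rw [hX]
      calc (1 / K : ℝ) * ∑ k, ind (θstar ∈ C k ω) ≤ (1 / K : ℝ) * K := by
            apply mul_le_mul_of_nonneg_left hsum (by positivity)
        _ = 1 := by field_simp
  -- expectation of X
  have hEX : 1 - γ ≤ ∫ ω, X ω ∂P := by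
    have : ∫ ω, X ω ∂P = (1 / K : ℝ) * ∑ k, (P (S k)).toReal := by
      rw [hX]
      rw [integral_const_mul]
      rw [integral_finset_sum _ (fun k _ => hfint k)]
      simp_rw [hfintg]
    rw [this]
    have : (1 - γ) = (1 / K : ℝ) * ∑ _k : Fin K, (1 - γ) := by
      simp; field_simp
    rw [this]
    apply mul_le_mul_of_nonneg_left _ (by positivity)
    exact Finset.sum_le_sum fun k _ => hcov k
  -- complement event
  set B : Set Ω := {ω | X ω > τ} with hB
  have hBm : MeasurableSet B := measurableSet_lt measurable_const hXm
  -- key inequality : (1-τ) * P(Bᶜ) ≤ ∫ (1 - X)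
  have hkey : (1 - τ) * (P Bᶜ).toReal ≤ ∫ ω, (1 - X ω) ∂P := by
    have hpt : ∀ ω, Bᶜ.indicator (fun _ => (1 - τ)) ω ≤ 1 - X ω := by
      intro ω
      by_cases h : ω ∈ Bᶜ
      · rw [Set.indicator_of_mem h]
        have : X ω ≤ τ := not_lt.mp h
        linarith
      · rw [Set.indicator_of_notMem h]
        linarith [(hX01 ω).2]
    have hlhs : ∫ ω, Bᶜ.indicator (fun _ => (1 - τ)) ω ∂P = (1 - τ) * (P Bᶜ).toReal := by
      rw [integral_indicator_const _ hBm.compl]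
      simp [mul_comm, measureReal_def]
    rw [← hlhs]
    apply integral_mono _ ((integrable_const (1:ℝ)).sub hXint) hpt
    exact (integrable_const (1 - τ)).indicator hBm.compl
  have hint1X : ∫ ω, (1 - X ω) ∂P ≤ γ := by
    rw [integral_sub (integrable_const 1) hXint]
    simp only [integral_const, measure_univ, probReal_univ, ENNReal.toReal_one, smul_eq_mul, one_mul]
    linarith
  have h1τ : (0:ℝ) < 1 - τ := by linarith [hτ.2]
  have hPBc : (P Bᶜ).toReal ≤ γ / (1 - τ) := by
    rw [le_div_iff₀ h1τ]
    nlinarith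
  have hPB : (P B).toReal = 1 - (P Bᶜ).toReal := by
    have h := prob_compl_eq_one_sub (μ := P) hBm
    rw [h, ENNReal.toReal_sub_of_le prob_le_one ENNReal.one_ne_top]
    simp
  show 1 - γ / (1 - τ) ≤ (P B).toReal
  rw [hPB]
  linarith
end

section
/- Let C_1, ..., C_K ⊆ ℝ be intervals and τ ∈ [1/2, 1). Then the majority-vote set C^τ = {θ ∈ ℝ : (1/K) Σ_{k=1}^K 𝟙(θ ∈ C_k) > τ} satisfies λ(C^τ) ≤ max_{1 ≤ k ≤ K} λ(C_k), where λ denotes Lebesgue measure on ℝ. -/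
open MeasureTheory

open Classical in
lemma ind_sum_eq_card (K : ℕ) (C : Fin K → Set ℝ) (θ : ℝ) :
    ∑ k, ind (θ ∈ C k) = ((Finset.univ.filter (fun k => θ ∈ C k)).card : ℝ) := by
  simp [ind, Finset.sum_boole]

open Classical in
lemma half_lt_card (K : ℕ) (hK : 0 < K) (C : Fin K → Set ℝ) (τ : ℝ) (hτ : 1 / 2 ≤ τ)
    (θ : ℝ) (hθ : τ < (1 / K : ℝ) * ∑ k, ind (θ ∈ C k)) :
    (K : ℝ) < 2 * ((Finset.univ.filter (fun k => θ ∈ C k)).card : ℝ) := by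
  rw [ind_sum_eq_card] at hθ
  have hK' : (0 : ℝ) < K := by exact_mod_cast hK
  have h : (1 / 2 : ℝ) < (1 / K : ℝ) * ((Finset.univ.filter (fun k => θ ∈ C k)).card : ℝ) :=
    lt_of_le_of_lt hτ hθ
  rw [div_mul_eq_mul_div, lt_div_iff₀ hK', one_mul] at h
  linarith

/-- **Majority vote of intervals.** If `C 1, …, C K ⊆ ℝ` are intervals (order-convex sets)
and `τ ∈ [1/2, 1)`, then the majority-vote set
`C^τ = {θ : (1/K) Σ_k 𝟙(θ ∈ C k) > τ}` satisfies `λ(C^τ) ≤ max_k λ(C k)`. -/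
theorem majority_vote_intervals
    (K : ℕ) (hK : 0 < K) (C : Fin K → Set ℝ)
    (hC : ∀ k, (C k).OrdConnected)
    (τ : ℝ) (hτ : τ ∈ Set.Ico (1 / 2 : ℝ) 1) :
    volume {θ : ℝ | (1 / K : ℝ) * ∑ k, ind (θ ∈ C k) > τ} ≤ ⨆ k, volume (C k) := by
  classical
  refine le_trans (Real.volume_le_diam _) (EMetric.diam_le ?_)
  intro a ha b hb
  simp only [Set.mem_setOf_eq] at ha hb
  have hA := half_lt_card K hK C τ hτ.1 a ha
  have hB := half_lt_card K hK C τ hτ.1 b hb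
  set A := Finset.univ.filter (fun k => a ∈ C k) with hA2
  set B := Finset.univ.filter (fun k => b ∈ C k) with hB2
  have hcard : K < A.card + B.card := by
    have : (K : ℝ) < A.card + B.card := by linarith
    exact_mod_cast this
  have hunion : (A ∪ B).card ≤ K := by
    simpa using Finset.card_le_card (Finset.subset_univ (A ∪ B))
  have hinter : 0 < (A ∩ B).card := by
    have := Finset.card_inter_add_card_union A B
    omega
  obtain ⟨k, hk⟩ := Finset.card_pos.mp hinter
  rw [Finset.mem_inter, hA2, hB2, Finset.mem_filter, Finset.mem_filter] at hk
  have hak : a ∈ C k := hk.1.2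
  have hbk : b ∈ C k := hk.2.2
  have hsub : Set.uIcc a b ⊆ C k := (hC k).uIcc_subset hak hbk
  calc edist a b = ENNReal.ofReal |b - a| := by
        rw [edist_dist, Real.dist_eq, abs_sub_comm]
    _ = volume (Set.uIcc a b) := (Real.volume_interval).symm
    _ ≤ volume (C k) := measure_mono hsub
    _ ≤ ⨆ k, volume (C k) := le_iSup (fun k => volume (C k)) k
end

section
/- Let C_1, ..., C_K (K ≥ 2) be random subsets of Θ, each satisfying P(θ_* ∈ C_k) ≥ 1−γ for a fixed θ_* ∈ Θ and γ ∈ (0,1), and let π be a uniformly random permutation of {1,...,K}, independent of (C_1, ..., C_K). Define C^π = ∩_{k=1}^K C^M(π(1):π(k)), where C^M(π(1):π(k)) = {θ ∈ Θ : (1/k) Σ_{j=1}^k 𝟙(θ ∈ C_{π(j)}) > 1/2}. Then P(θ_* ∈ C^π) ≥ 1 − 2γ, and (pointwise, for every outcome) C^π ⊆ C^M, where C^M = {θ : (1/K) Σ_{k=1}^K 𝟙(θ ∈ C_k) > 1/2}. -/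
open MeasureTheory ProbabilityTheory
open scoped ENNReal

/-- The (discrete) measurable space on permutations of `Fin K`. -/
instance (K : ℕ) : MeasurableSpace (Equiv.Perm (Fin K)) := ⊤

section RomAuxSec

open Finset
open Fin.NatCast

namespace RomAux

variable {K : ℕ} [NeZero K]

/-- Walk of partial sums of `h` read cyclically. -/
def gw (h : Fin K → ℤ) (n : ℕ) : ℤ := ∑ m ∈ Finset.range n, h (m : Fin K)

lemma gw_succ (h : Fin K → ℤ) (n : ℕ) : gw h (n + 1) = gw h n + h (n : Fin K) :=
  Finset.sum_range_succ _ _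

lemma gw_K (h : Fin K → ℤ) : gw h K = ∑ k, h k := by
  rw [gw, ← Fin.sum_univ_eq_sum_range (fun m => h (m : Fin K)) K]
  exact Finset.sum_congr rfl fun i _ => by rw [Fin.cast_val_eq_self]

lemma gw_add_K (h : Fin K → ℤ) (m : ℕ) : gw h (m + K) = gw h m + ∑ k, h k := by
  induction m with
  | zero =>
      rw [Nat.zero_add, gw_K]; simp [gw]
  | succ m ih =>
      have : m + 1 + K = (m + K) + 1 := by omega
      rw [this, gw_succ, ih, gw_succ]
      have : ((m + K : ℕ) : Fin K) = (m : Fin K) := by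
        push_cast
        simp
      rw [this]; ring

lemma gw_qK (h : Fin K → ℤ) (q r : ℕ) : gw h (q * K + r) = gw h r + q * ∑ k, h k := by
  induction q with
  | zero => simp
  | succ q ih =>
      have : (q + 1) * K + r = (q * K + r) + K := by ring
      rw [this, gw_add_K, ih]; push_cast; ring

lemma gw_lower (h : Fin K → ℤ) (B : ℤ) (hB : ∀ r < K, B ≤ gw h r) (m : ℕ) :
    B + (m / K : ℕ) * ∑ k, h k ≤ gw h m := by
  have h1 : gw h m = gw h (m % K) + (m / K : ℕ) * ∑ k, h k := by
    conv_lhs => rw [← Nat.div_add_mod m K]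
    rw [mul_comm K (m / K), gw_qK]
  rw [h1]
  have := hB (m % K) (Nat.mod_lt _ (Nat.pos_of_ne_zero (NeZero.ne K)))
  linarith

lemma gw_ivt (h : Fin K → ℤ) (hpm : ∀ k, h k = 1 ∨ h k = -1) (c : ℤ) :
    ∀ n a, gw h a ≤ c → c ≤ gw h (a + n) → ∃ m ≤ n, gw h (a + m) = c := by
  intro n
  induction n with
  | zero => intro a h1 h2; exact ⟨0, le_refl _, le_antisymm (by simpa using h1) (by simpa using h2)⟩
  | succ n ih =>
      intro a h1 h2
      rcases eq_or_lt_of_le h1 with he | hlt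
      · exact ⟨0, Nat.zero_le _, by simpa using he⟩
      · have hstep : gw h (a + 1) ≤ gw h a + 1 := by
          rw [gw_succ]
          rcases hpm (a : Fin K) with e | e <;> simp [e]
        have h1' : gw h (a + 1) ≤ c := le_trans hstep (by omega)
        have h2' : c ≤ gw h ((a + 1) + n) := by
          have : (a + 1) + n = a + (n + 1) := by omega
          rw [this]; exact h2
        obtain ⟨m, hm, hgm⟩ := ih (a + 1) h1' h2'
        exact ⟨m + 1, by omega, by rw [show a + (m+1) = (a+1) + m by omega]; exact hgm⟩

/-- Rotated prefix sums in terms of the walk. -/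
lemma gw_prefix (h : Fin K → ℤ) (i n : ℕ) :
    gw h (i + n) - gw h i = ∑ j ∈ Finset.range n, h ((i + j : ℕ) : Fin K) := by
  induction n with
  | zero => simp
  | succ n ih =>
      rw [show i + (n + 1) = (i + n) + 1 by omega, gw_succ, Finset.sum_range_succ, ← ih]
      push_cast
      ring

lemma prefix_filter (h : Fin K → ℤ) (i k : Fin K) :
    ∑ j ∈ Finset.univ.filter (fun j : Fin K => j ≤ k), h (j + i)
      = gw h ((i : ℕ) + ((k : ℕ) + 1)) - gw h (i : ℕ) := by
  rw [gw_prefix]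
  refine Finset.sum_nbij' (fun j => (j : ℕ)) (fun m => (m : Fin K)) ?_ ?_ ?_ ?_ ?_
  · intro j hj
    simp only [Finset.mem_filter, Finset.mem_univ, true_and] at hj
    simp only [Finset.mem_range]
    omega
  · intro m hm
    simp only [Finset.mem_range] at hm
    simp only [Finset.mem_filter, Finset.mem_univ, true_and]
    have hmK : m < K := lt_of_lt_of_le hm (by have := k.isLt; omega)
    have : ((m : Fin K) : ℕ) = m := by simp [Fin.val_natCast, Nat.mod_eq_of_lt hmK]
    rw [Fin.le_def, this]
    omega
  · intro j hj; simp [Fin.cast_val_eq_self]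
  · intro m hm
    simp only [Finset.mem_range] at hm
    have hmK : m < K := lt_of_lt_of_le hm (by have := k.isLt; omega)
    simp [Fin.val_natCast, Nat.mod_eq_of_lt hmK]
  · intro j hj
    congr 1
    rw [add_comm j i]
    have : (((i : ℕ) + (j : ℕ) : ℕ) : Fin K) = i + j := by
      push_cast
      simp
    exact this.symm

open Classical in
lemma cycle_lemma (h : Fin K → ℤ) (hpm : ∀ k, h k = 1 ∨ h k = -1) :
    (∑ k, h k) ≤ ((Finset.univ.filter (fun i : Fin K =>
      ∀ k : Fin K, 0 < ∑ j ∈ Finset.univ.filter (fun j => j ≤ k), h (j + i))).card : ℤ) := by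
  set T : ℤ := ∑ k, h k with hT
  rcases le_or_gt T 0 with hT0 | hT0
  · exact le_trans hT0 (by positivity)
  · have hK0 : 0 < K := Nat.pos_of_ne_zero (NeZero.ne K)
    obtain ⟨i0, hi0r, hi0min⟩ := Finset.exists_min_image (Finset.range K) (gw h)
      ⟨0, Finset.mem_range.mpr hK0⟩
    have hi0K : i0 < K := Finset.mem_range.mp hi0r
    set B : ℤ := gw h i0 with hB
    have hBmin : ∀ r < K, B ≤ gw h r := fun r hr =>
      hi0min r (Finset.mem_range.mpr hr)
    have hi0 : gw h i0 = B := rfl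
    set Tn : ℕ := T.toNat with hTndef
    have hTn : (Tn : ℤ) = T := Int.toNat_of_nonneg (le_of_lt hT0)
    have hTn1 : 1 ≤ Tn := by omega
    set N : ℕ := K * (Tn + 1) with hN
    have hbig : ∀ m, N < m → B + T < gw h m := by
      intro m hm
      have hdiv : Tn + 1 ≤ m / K := (Nat.le_div_iff_mul_le hK0).mpr (by rw [mul_comm]; omega)
      have hlow := gw_lower h B hBmin m
      have hcast : (Tn + 1 : ℤ) ≤ ((m / K : ℕ) : ℤ) := by exact_mod_cast hdiv
      rw [hTn] at hcast
      nlinarith [hlow, hcast, hT0]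
    have hex : ∀ t, t < Tn → ∃ m ≤ N, gw h m = B + t := by
      intro t ht
      have h1 : gw h i0 ≤ B + t := by
        rw [hi0]; have : (0:ℤ) ≤ t := Int.natCast_nonneg t; linarith
      have h2 : B + t ≤ gw h (i0 + K) := by
        rw [gw_add_K, hi0, ← hT]
        have : (t : ℤ) < T := by rw [← hTn]; exact_mod_cast ht
        linarith
      obtain ⟨m, hm, hgm⟩ := gw_ivt h hpm (B + t) K i0 h1 h2
      have hN2 : 2 * K ≤ N := by
        have h2 : 2 ≤ Tn + 1 := by omega
        calc 2 * K ≤ (Tn + 1) * K := Nat.mul_le_mul_right K h2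
          _ = N := by rw [hN, mul_comm]
      exact ⟨i0 + m, le_trans (by omega : i0 + m ≤ 2 * K) hN2, hgm⟩
    set M : ℕ → ℕ := fun t => Nat.findGreatest (fun m => gw h m = B + t) N with hM
    have hMspec : ∀ t, t < Tn → gw h (M t) = B + t := by
      intro t ht
      obtain ⟨m, hm, he⟩ := hex t ht
      exact Nat.findGreatest_spec (P := fun m => gw h m = B + (t : ℤ)) hm he
    have hMfut : ∀ t, t < Tn → ∀ m, M t < m → B + t < gw h m := by
      intro t ht m hm
      by_contra hc
      push_neg at hc
      have htT : (t : ℤ) < T := by rw [← hTn]; exact_mod_cast ht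
      have hup : B + t ≤ gw h (m + (N + 1)) := by
        have := hbig (m + (N + 1)) (by omega)
        linarith
      obtain ⟨d, hd, hgd⟩ := gw_ivt h hpm (B + t) (N + 1) m hc hup
      have hmd : M t < m + d := by omega
      rcases le_or_gt (m + d) N with hle | hgt
      · exact Nat.findGreatest_is_greatest hmd hle hgd
      · have := hbig (m + d) hgt
        rw [hgd] at this
        linarith
    have key : ∀ t, t < Tn → ∀ u, u < Tn → M t < M u → M t % K = M u % K → False := by
      intro t ht u hu hlt hmod
      have hdvd : K ∣ M u - M t := (Nat.modEq_iff_dvd' (le_of_lt hlt)).mp hmod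
      obtain ⟨e, he⟩ := hdvd
      have he1 : 1 ≤ e := by
        rcases Nat.eq_zero_or_pos e with h0 | h1
        · rw [h0, Nat.mul_zero] at he; omega
        · exact h1
      rw [mul_comm] at he
      have hrepr : M u = e * K + M t := by omega
      have : gw h (M u) = gw h (M t) + e * T := by rw [hrepr, gw_qK, hT]
      rw [hMspec t ht, hMspec u hu] at this
      have he1' : (1 : ℤ) ≤ e := by exact_mod_cast he1
      have htu : (u : ℤ) = t + e * T := by omega
      have huT : (u : ℤ) < T := by rw [← hTn]; exact_mod_cast hu
      have ht0 : (0 : ℤ) ≤ t := Int.natCast_nonneg t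
      nlinarith
    have hgood : ∀ t, t < Tn → ((M t : ℕ) : Fin K) ∈ Finset.univ.filter (fun i : Fin K =>
        ∀ k : Fin K, 0 < ∑ j ∈ Finset.univ.filter (fun j => j ≤ k), h (j + i)) := by
      intro t ht
      simp only [Finset.mem_filter, Finset.mem_univ, true_and]
      intro k
      rw [prefix_filter]
      have hval : (((M t : ℕ) : Fin K) : ℕ) = M t % K := Fin.val_natCast _ _
      rw [hval]
      have hrep : ∀ n : ℕ, gw h (M t % K + n) = gw h (M t + n) - (M t / K : ℕ) * T := by
        intro n
        have hdm := Nat.div_add_mod (M t) K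
        have hd : M t + n = (M t / K) * K + (M t % K + n) := by
          rw [mul_comm]; omega
        rw [hd, gw_qK, hT]; ring
      have h0 : gw h (M t % K) = gw h (M t) - (M t / K : ℕ) * T := by
        simpa using hrep 0
      rw [hrep ((k : ℕ) + 1), h0]
      have h1 := hMfut t ht (M t + ((k : ℕ) + 1)) (by omega)
      have h2 := hMspec t ht
      linarith
    have hinj : Set.InjOn (fun t => ((M t : ℕ) : Fin K)) ↑(Finset.range Tn) := by
      intro t ht u hu heq
      simp only [Finset.coe_range, Set.mem_Iio] at ht hu
      have hmod : M t % K = M u % K := by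
        have := congrArg Fin.val heq
        simpa [Fin.val_natCast] using this
      rcases lt_trichotomy (M t) (M u) with hlt | heqM | hgt
      · exact absurd (key t ht u hu hlt hmod) (by simp)
      · have := hMspec t ht
        rw [heqM, hMspec u hu] at this
        omega
      · exact absurd (key u hu t ht hgt hmod.symm) (by simp)
    have hcard : Tn ≤ (Finset.univ.filter (fun i : Fin K =>
        ∀ k : Fin K, 0 < ∑ j ∈ Finset.univ.filter (fun j => j ≤ k), h (j + i))).card := by
      have h1 : ((Finset.range Tn).image (fun t => ((M t : ℕ) : Fin K))).card
          = Tn := by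
        rw [Finset.card_image_of_injOn hinj, Finset.card_range]
      rw [← h1]
      apply Finset.card_le_card
      intro i hi
      obtain ⟨t, ht, he⟩ := Finset.mem_image.mp hi
      rw [← he]
      exact hgood t (Finset.mem_range.mp ht)
    calc T = (Tn : ℤ) := hTn.symm
    _ ≤ _ := by exact_mod_cast hcard

open Classical in
lemma perm_count (h : Fin K → ℤ) (hpm : ∀ k, h k = 1 ∨ h k = -1) :
    (∑ k, h k) * (Nat.factorial K : ℤ) ≤ (K : ℤ) *
      ((Finset.univ.filter (fun σ : Equiv.Perm (Fin K) =>
        ∀ k : Fin K, 0 < ∑ j ∈ Finset.univ.filter (fun j => j ≤ k), h (σ j))).card : ℤ) := by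
  set T : ℤ := ∑ k, h k with hT
  have step1 : ∀ σ : Equiv.Perm (Fin K),
      T ≤ ∑ i : Fin K, (if (∀ k : Fin K,
        0 < ∑ j ∈ Finset.univ.filter (fun j => j ≤ k), h (((Equiv.addRight i).trans σ) j))
          then (1:ℤ) else 0) := by
    intro σ
    have hc := cycle_lemma (fun k => h (σ k)) (fun k => hpm (σ k))
    have hsum : ∑ k, h (σ k) = T := Equiv.sum_comp σ h
    rw [hsum] at hc
    refine le_trans hc ?_
    rw [Finset.card_filter]
    push_cast
    apply le_of_eq
    refine Finset.sum_congr rfl fun i _ => ?_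
    have : (∀ k : Fin K, 0 < ∑ j ∈ Finset.univ.filter (fun j => j ≤ k), h (σ (j + i)))
        ↔ (∀ k : Fin K,
          0 < ∑ j ∈ Finset.univ.filter (fun j => j ≤ k), h (((Equiv.addRight i).trans σ) j)) := by
      simp [Equiv.trans_apply, Equiv.coe_addRight]
    simp only [this]
  calc T * (Nat.factorial K : ℤ)
      = ∑ _σ : Equiv.Perm (Fin K), T := by
        rw [Finset.sum_const, Finset.card_univ, Fintype.card_perm, Fintype.card_fin,
          nsmul_eq_mul, mul_comm]
    _ ≤ ∑ σ : Equiv.Perm (Fin K), ∑ i : Fin K, (if (∀ k : Fin K,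
          0 < ∑ j ∈ Finset.univ.filter (fun j => j ≤ k), h (((Equiv.addRight i).trans σ) j))
            then (1:ℤ) else 0) := Finset.sum_le_sum fun σ _ => step1 σ
    _ = ∑ i : Fin K, ∑ σ : Equiv.Perm (Fin K), (if (∀ k : Fin K,
          0 < ∑ j ∈ Finset.univ.filter (fun j => j ≤ k), h (((Equiv.addRight i).trans σ) j))
            then (1:ℤ) else 0) := Finset.sum_comm
    _ = ∑ _i : Fin K, ((Finset.univ.filter (fun σ : Equiv.Perm (Fin K) =>
          ∀ k : Fin K, 0 < ∑ j ∈ Finset.univ.filter (fun j => j ≤ k), h (σ j))).card : ℤ) := by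
        refine Finset.sum_congr rfl fun i _ => ?_
        have he : ∀ σ : Equiv.Perm (Fin K),
            (Equiv.addRight i).trans σ = (Equiv.mulRight (Equiv.addRight i)) σ := fun σ => rfl
        simp only [he]
        rw [Equiv.sum_comp (Equiv.mulRight (Equiv.addRight i))
          (fun τ : Equiv.Perm (Fin K) => if (∀ k : Fin K,
            0 < ∑ j ∈ Finset.univ.filter (fun j => j ≤ k), h (τ j)) then (1:ℤ) else 0)]
        rw [Finset.card_filter]
        push_cast
        rfl
    _ = (K : ℤ) * _ := by
        rw [Finset.sum_const, Finset.card_univ, Fintype.card_fin, nsmul_eq_mul]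

open Classical in
lemma perm_count_real (x : Fin K → ℝ) (hx : ∀ k, x k = 0 ∨ x k = 1) :
    (1 - (2 / K) * ∑ k, (1 - x k)) * (Nat.factorial K : ℝ) ≤
      ∑ σ : Equiv.Perm (Fin K), (if (∀ k : Fin K,
        (1 / ((k : ℕ) + 1) : ℝ) * ∑ j ∈ Finset.univ.filter (fun j => j ≤ k), x (σ j) > 1/2)
          then (1:ℝ) else 0) := by
  have hK0 : 0 < K := Nat.pos_of_ne_zero (NeZero.ne K)
  have hK0R : (0:ℝ) < K := by exact_mod_cast hK0
  set f : Fin K → ℤ := fun k => if x k = 1 then 1 else -1 with hf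
  have hpm : ∀ k, f k = 1 ∨ f k = -1 := by
    intro k; by_cases h : x k = 1 <;> simp [hf, h]
  have hxf : ∀ m, x m = ((f m : ℝ) + 1) / 2 := by
    intro m
    rcases hx m with h | h
    · have h1 : ¬ (x m = 1) := by rw [h]; norm_num
      rw [h]; simp [hf, h1]
    · rw [h]; simp [hf, h]
  have hcard : ∀ k : Fin K, (Finset.univ.filter (fun j : Fin K => j ≤ k)).card = (k : ℕ) + 1 := by
    intro k
    have : Finset.univ.filter (fun j : Fin K => j ≤ k) = Finset.Iic k := by
      ext j; simp
    rw [this, Fin.card_Iic]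
  have hiff : ∀ (σ : Equiv.Perm (Fin K)) (k : Fin K),
      ((1 / ((k : ℕ) + 1) : ℝ) * ∑ j ∈ Finset.univ.filter (fun j => j ≤ k), x (σ j) > 1/2)
        ↔ 0 < ∑ j ∈ Finset.univ.filter (fun j => j ≤ k), f (σ j) := by
    intro σ k
    have hc : (0:ℝ) < ((k:ℕ):ℝ) + 1 := by positivity
    have hsum : ∑ j ∈ Finset.univ.filter (fun j : Fin K => j ≤ k), x (σ j)
        = (((∑ j ∈ Finset.univ.filter (fun j : Fin K => j ≤ k), f (σ j) : ℤ) : ℝ)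
            + (((k:ℕ):ℝ) + 1)) / 2 := by
      rw [Finset.sum_congr rfl (fun j _ => hxf (σ j)), ← Finset.sum_div]
      congr 1
      rw [Finset.sum_add_distrib, Finset.sum_const, hcard k]
      push_cast
      ring
    rw [gt_iff_lt, hsum, show (1 / (((k:ℕ):ℝ)+1)) = ((((k:ℕ):ℝ)+1))⁻¹ from one_div _,
      inv_mul_eq_div, lt_div_iff₀ hc]
    constructor
    · intro hlt
      have : (0:ℝ) < ((∑ j ∈ Finset.univ.filter (fun j : Fin K => j ≤ k), f (σ j) : ℤ) : ℝ) := by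
        linarith
      exact_mod_cast this
    · intro hlt
      have : (0:ℝ) < ((∑ j ∈ Finset.univ.filter (fun j : Fin K => j ≤ k), f (σ j) : ℤ) : ℝ) := by
        exact_mod_cast hlt
      linarith
  have hmain := perm_count f hpm
  have hrhs : ∑ σ : Equiv.Perm (Fin K), (if (∀ k : Fin K,
        (1 / ((k : ℕ) + 1) : ℝ) * ∑ j ∈ Finset.univ.filter (fun j => j ≤ k), x (σ j) > 1/2)
          then (1:ℝ) else 0)
      = ((Finset.univ.filter (fun σ : Equiv.Perm (Fin K) =>
        ∀ k : Fin K, 0 < ∑ j ∈ Finset.univ.filter (fun j => j ≤ k), f (σ j))).card : ℝ) := by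
    rw [Finset.card_filter]
    push_cast
    refine Finset.sum_congr rfl fun σ _ => ?_
    exact if_congr (forall_congr' fun k => hiff σ k) rfl rfl
  have hT : ((∑ k, f k : ℤ) : ℝ) = 2 * (∑ k, x k) - K := by
    push_cast
    have : ∀ k : Fin K, ((if x k = 1 then (1:ℤ) else -1 : ℤ) : ℝ) = 2 * x k - 1 := by
      intro k
      rcases hx k with h | h
      · have h1 : ¬ (x k = 1) := by rw [h]; norm_num
        rw [h]; simp [h1]
      · rw [h]; simp; norm_num
    rw [Finset.sum_congr rfl (fun k _ => this k), Finset.sum_sub_distrib, Finset.sum_const,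
      Finset.card_univ, Fintype.card_fin, ← Finset.mul_sum]
    push_cast
    ring
  rw [hrhs]
  have hmainR : ((∑ k, f k : ℤ) : ℝ) * (Nat.factorial K : ℝ) ≤ (K : ℝ) *
      ((Finset.univ.filter (fun σ : Equiv.Perm (Fin K) =>
        ∀ k : Fin K, 0 < ∑ j ∈ Finset.univ.filter (fun j => j ≤ k), f (σ j))).card : ℝ) := by
    exact_mod_cast hmain
  rw [hT] at hmainR
  have hsum1 : ∑ k, (1 - x k) = (K : ℝ) - ∑ k, x k := by
    rw [Finset.sum_sub_distrib, Finset.sum_const, Finset.card_univ, Fintype.card_fin]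
    push_cast
    ring
  rw [hsum1]
  refine le_of_mul_le_mul_right ?_ hK0R
  have hfld : (1 - 2 / (K:ℝ) * ((K:ℝ) - ∑ k, x k)) * (K:ℝ) = 2 * (∑ k, x k) - (K:ℝ) := by
    field_simp
    ring
  calc (1 - 2 / (K:ℝ) * ((K:ℝ) - ∑ k, x k)) * (Nat.factorial K : ℝ) * (K:ℝ)
      = ((1 - 2 / (K:ℝ) * ((K:ℝ) - ∑ k, x k)) * (K:ℝ)) * (Nat.factorial K : ℝ) := by ring
    _ = (2 * (∑ k, x k) - (K:ℝ)) * (Nat.factorial K : ℝ) := by rw [hfld]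
    _ ≤ (K : ℝ) * ((Finset.univ.filter (fun σ : Equiv.Perm (Fin K) =>
          ∀ k : Fin K, 0 < ∑ j ∈ Finset.univ.filter (fun j => j ≤ k), f (σ j))).card : ℝ) :=
        hmainR
    _ = _ := by ring

end RomAux

end RomAuxSec

open Classical in
/-- **Random ordering improves the majority vote.** If `C 1, …, C K` (`K ≥ 2`) are random
sets each covering `θ⋆` with probability at least `1 − γ` and `π` is a uniformly random
permutation of `{1,…,K}`, independent of the coverage indicators, then
`C^π = ∩_{k=1}^K C^M(π(1):π(k))` covers `θ⋆` with probability at least `1 − 2γ`, and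
pointwise `C^π ⊆ C^M`. -/
theorem random_ordering_majority_vote
    {Ω Θ : Type*} [MeasurableSpace Ω] (P : Measure Ω) [IsProbabilityMeasure P]
    (K : ℕ) (hK : 2 ≤ K) (C : Fin K → Ω → Set Θ) (θstar : Θ)
    (γ : ℝ) (hγ : γ ∈ Set.Ioo (0 : ℝ) 1)
    (hmeas : ∀ k, MeasurableSet {ω | θstar ∈ C k ω})
    (hcov : ∀ k, 1 - γ ≤ (P {ω | θstar ∈ C k ω}).toReal)
    (π : Ω → Equiv.Perm (Fin K)) (hπmeas : Measurable π)
    (hπunif : P.map π = (PMF.uniformOfFintype (Equiv.Perm (Fin K))).toMeasure)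
    (hπindep : IndepFun π (fun ω => fun k => ind (θstar ∈ C k ω)) P) :
    1 - 2 * γ ≤
      (P {ω | θstar ∈ ⋂ k : Fin K,
        {θ : Θ | (1 / ((k : ℕ) + 1) : ℝ) *
          ∑ j ∈ Finset.univ.filter (fun j : Fin K => j ≤ k), ind (θ ∈ C (π ω j) ω)
            > 1 / 2}}).toReal ∧
    ∀ ω : Ω,
      (⋂ k : Fin K,
        {θ : Θ | (1 / ((k : ℕ) + 1) : ℝ) *
          ∑ j ∈ Finset.univ.filter (fun j : Fin K => j ≤ k), ind (θ ∈ C (π ω j) ω)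
            > 1 / 2}) ⊆
      {θ : Θ | (1 / K : ℝ) * ∑ k, ind (θ ∈ C k ω) > 1 / 2} := by
  classical
  obtain ⟨hγ0, hγ1⟩ := hγ
  have hKpos : 0 < K := by omega
  haveI : NeZero K := ⟨by omega⟩
  have htop : ∀ s : Set (Equiv.Perm (Fin K)), MeasurableSet s := fun s =>
    MeasurableSpace.measurableSet_top
  set X : Ω → Fin K → ℝ := fun ω k => ind (θstar ∈ C k ω) with hXdef
  have hXind : ∀ m : Fin K, (fun ω => ind (θstar ∈ C m ω))
      = Set.indicator {ω | θstar ∈ C m ω} (fun _ => (1:ℝ)) := by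
    intro m; ext ω
    by_cases h : θstar ∈ C m ω <;> simp [ind, h, Set.indicator]
  have hXmeas_k : ∀ m : Fin K, Measurable (fun ω => ind (θstar ∈ C m ω)) := by
    intro m
    rw [hXind m]
    exact measurable_const.indicator (hmeas m)
  have hXmeas : Measurable X := measurable_pi_lambda _ hXmeas_k
  have hXint : ∀ m : Fin K, Integrable (fun ω => ind (θstar ∈ C m ω)) P := by
    intro m
    rw [hXind m]
    exact (integrable_const 1).indicator (hmeas m)
  have hXval : ∀ ω m, X ω m = 0 ∨ X ω m = 1 := by
    intro ω m
    by_cases h : θstar ∈ C m ω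
    · right; simp [hXdef, ind, h]
    · left; simp [hXdef, ind, h]
  have hXintegral : ∀ m : Fin K, ∫ ω, ind (θstar ∈ C m ω) ∂P
      = (P {ω | θstar ∈ C m ω}).toReal := by
    intro m
    rw [hXind m]
    exact MeasureTheory.integral_indicator_one (hmeas m)
  set Q : Equiv.Perm (Fin K) → (Fin K → ℝ) → Prop := fun σ x =>
    ∀ k : Fin K, (1 / ((k : ℕ) + 1) : ℝ) *
      ∑ j ∈ Finset.univ.filter (fun j : Fin K => j ≤ k), x (σ j) > 1/2 with hQdef
  have hQmeasSet : ∀ σ, MeasurableSet {x : Fin K → ℝ | Q σ x} := by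
    intro σ
    have he : {x : Fin K → ℝ | Q σ x} = ⋂ k : Fin K,
        {x : Fin K → ℝ | (1/2 : ℝ) < (1 / ((k : ℕ) + 1) : ℝ) *
          ∑ j ∈ Finset.univ.filter (fun j : Fin K => j ≤ k), x (σ j)} := by
      ext x
      simp only [hQdef, Set.mem_setOf_eq, Set.mem_iInter, gt_iff_lt]
    rw [he]
    refine MeasurableSet.iInter fun k => ?_
    have hm : Measurable (fun x : Fin K → ℝ => (1 / ((k : ℕ) + 1) : ℝ) *
        ∑ j ∈ Finset.univ.filter (fun j : Fin K => j ≤ k), x (σ j)) :=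
      (Finset.measurable_sum _ (fun j _ => measurable_pi_apply (σ j))).const_mul _
    exact measurableSet_lt measurable_const hm
  constructor
  · -- probability part
    have hevent : {ω | θstar ∈ ⋂ k : Fin K,
        {θ : Θ | (1 / ((k : ℕ) + 1) : ℝ) *
          ∑ j ∈ Finset.univ.filter (fun j : Fin K => j ≤ k), ind (θ ∈ C (π ω j) ω)
            > 1 / 2}} = {ω | Q (π ω) (X ω)} := by
      ext ω
      simp only [Set.mem_setOf_eq, Set.mem_iInter, hQdef, hXdef]
    rw [hevent]
    have hA : {ω | Q (π ω) (X ω)} =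
        ⋃ σ ∈ (Finset.univ : Finset (Equiv.Perm (Fin K))),
          (π ⁻¹' {σ} ∩ X ⁻¹' {x | Q σ x}) := by
      ext ω
      simp only [Set.mem_setOf_eq, Set.mem_iUnion, Set.mem_inter_iff, Set.mem_preimage,
        Set.mem_singleton_iff, Finset.mem_univ, exists_true_left]
      constructor
      · intro h; exact ⟨π ω, ⟨rfl, h⟩⟩
      · rintro ⟨σ, hσ, h⟩; rw [hσ]; exact h
    have hPA : P {ω | Q (π ω) (X ω)} =
        ∑ σ : Equiv.Perm (Fin K), P (π ⁻¹' {σ} ∩ X ⁻¹' {x | Q σ x}) := by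
      rw [hA]
      refine measure_biUnion_finset ?_ ?_
      · intro σ _ τ _ hne
        refine Set.disjoint_left.mpr ?_
        rintro ω ⟨h1, _⟩ ⟨h2, _⟩
        exact hne (h1.symm.trans h2)
      · intro σ _
        exact (hπmeas (htop {σ})).inter (hXmeas (hQmeasSet σ))
    have hterm : ∀ σ, P (π ⁻¹' {σ} ∩ X ⁻¹' {x | Q σ x})
        = P (π ⁻¹' {σ}) * P (X ⁻¹' {x | Q σ x}) := fun σ =>
      (ProbabilityTheory.indepFun_iff_measure_inter_preimage_eq_mul.mp hπindep)
        {σ} {x | Q σ x} (htop {σ}) (hQmeasSet σ)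
    have hfiber : ∀ σ : Equiv.Perm (Fin K),
        P (π ⁻¹' {σ}) = ((K.factorial : ℝ≥0∞))⁻¹ := by
      intro σ
      rw [← Measure.map_apply hπmeas (htop {σ}), hπunif,
        PMF.toMeasure_apply_singleton _ _ (htop {σ}), PMF.uniformOfFintype_apply,
        Fintype.card_perm, Fintype.card_fin]
    have htoReal : (P {ω | Q (π ω) (X ω)}).toReal
        = ∑ σ : Equiv.Perm (Fin K),
            ((K.factorial : ℝ))⁻¹ * (P (X ⁻¹' {x | Q σ x})).toReal := by
      rw [hPA, ENNReal.toReal_sum (fun σ _ => measure_ne_top P _)]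
      refine Finset.sum_congr rfl fun σ _ => ?_
      rw [hterm σ, hfiber σ, ENNReal.toReal_mul]
      congr 1
      rw [ENNReal.toReal_inv]
      simp
    rw [htoReal]
    have hPB : ∀ σ, (P (X ⁻¹' {x | Q σ x})).toReal
        = ∫ ω, (if Q σ (X ω) then (1:ℝ) else 0) ∂P := by
      intro σ
      rw [← measureReal_def, ← MeasureTheory.integral_indicator_one (hXmeas (hQmeasSet σ))]
      refine integral_congr_ae (Filter.Eventually.of_forall fun ω => ?_)
      by_cases h : Q σ (X ω) <;>
        simp [Set.indicator, Set.mem_preimage, Set.mem_setOf_eq, h]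
    have hFint : ∀ σ, Integrable (fun ω => (if Q σ (X ω) then (1:ℝ) else 0)) P := by
      intro σ
      have he : (fun ω => (if Q σ (X ω) then (1:ℝ) else 0))
          = (X ⁻¹' {x | Q σ x}).indicator (fun _ => (1:ℝ)) := by
        ext ω
        by_cases h : Q σ (X ω) <;>
          simp [Set.indicator, Set.mem_preimage, Set.mem_setOf_eq, h]
      rw [he]
      exact (integrable_const 1).indicator (hXmeas (hQmeasSet σ))
    -- key inequality : (1 - 2γ) * K! ≤ ∑ σ, (P Bσ).toReal
    have hkey : (1 - 2 * γ) * (K.factorial : ℝ)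
        ≤ ∑ σ : Equiv.Perm (Fin K), (P (X ⁻¹' {x | Q σ x})).toReal := by
      have hswap : ∑ σ : Equiv.Perm (Fin K), (P (X ⁻¹' {x | Q σ x})).toReal
          = ∫ ω, (∑ σ : Equiv.Perm (Fin K),
              (if Q σ (X ω) then (1:ℝ) else 0)) ∂P := by
        calc ∑ σ : Equiv.Perm (Fin K), (P (X ⁻¹' {x | Q σ x})).toReal
            = ∑ σ : Equiv.Perm (Fin K),
                ∫ ω, (if Q σ (X ω) then (1:ℝ) else 0) ∂P :=
              Finset.sum_congr rfl fun σ _ => hPB σ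
          _ = _ := (MeasureTheory.integral_finset_sum Finset.univ (fun σ _ => hFint σ)).symm
      rw [hswap]
      have hlhsint : Integrable (fun ω =>
          (1 - (2 / (K:ℝ)) * ∑ k : Fin K, (1 - X ω k)) * (K.factorial : ℝ)) P := by
        refine Integrable.mul_const ?_ _
        refine Integrable.sub (integrable_const 1) ?_
        refine Integrable.const_mul ?_ _
        exact integrable_finset_sum _ (fun k _ => (integrable_const 1).sub (hXint k))
      have hptwise : ∀ ω, (1 - (2 / (K:ℝ)) * ∑ k : Fin K, (1 - X ω k)) * (K.factorial : ℝ)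
          ≤ ∑ σ : Equiv.Perm (Fin K), (if Q σ (X ω) then (1:ℝ) else 0) := by
        intro ω
        exact RomAux.perm_count_real (X ω) (hXval ω)
      have hmono := integral_mono hlhsint
        (integrable_finset_sum _ (fun σ _ => hFint σ)) hptwise
      refine le_trans ?_ hmono
      have hcomp : ∫ ω, (1 - (2 / (K:ℝ)) * ∑ k : Fin K, (1 - X ω k)) * (K.factorial : ℝ) ∂P
          = (1 - (2 / (K:ℝ)) * ∑ k : Fin K,
              (1 - (P {ω | θstar ∈ C k ω}).toReal)) * (K.factorial : ℝ) := by
        have hint1 : ∀ k : Fin K, Integrable (fun ω => 1 - X ω k) P :=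
          fun k => (integrable_const 1).sub (hXint k)
        have e4 : ∀ k : Fin K, ∫ ω, (1 - X ω k) ∂P
            = 1 - (P {ω | θstar ∈ C k ω}).toReal := by
          intro k
          have e4a : ∫ ω, (1 - X ω k) ∂P = (∫ _ω, (1:ℝ) ∂P) - ∫ ω, X ω k ∂P :=
            integral_sub (integrable_const 1) (hXint k)
          rw [e4a, integral_const]
          simp only [measure_univ, probReal_univ, ENNReal.toReal_one, smul_eq_mul, one_mul]
          exact congrArg (fun r => 1 - r) (hXintegral k)
        have e3 : ∫ ω, (∑ k : Fin K, (1 - X ω k)) ∂P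
            = ∑ k : Fin K, (1 - (P {ω | θstar ∈ C k ω}).toReal) := by
          rw [integral_finset_sum _ (fun k _ => hint1 k)]
          exact Finset.sum_congr rfl fun k _ => e4 k
        have e2 : ∫ ω, (2 / (K:ℝ)) * (∑ k : Fin K, (1 - X ω k)) ∂P
            = (2 / (K:ℝ)) * ∑ k : Fin K, (1 - (P {ω | θstar ∈ C k ω}).toReal) := by
          rw [← e3]
          exact integral_smul ((2:ℝ) / K) _
        have e1 : ∫ ω, (1 - (2 / (K:ℝ)) * ∑ k : Fin K, (1 - X ω k)) ∂P
            = (∫ _ω, (1:ℝ) ∂P) - ∫ ω, (2 / (K:ℝ)) * ∑ k : Fin K, (1 - X ω k) ∂P :=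
          integral_sub (integrable_const 1)
            ((integrable_finset_sum _ (fun k _ => hint1 k)).const_mul _)
        rw [integral_mul_const, e1, e2, integral_const]
        simp only [measure_univ, probReal_univ, ENNReal.toReal_one, smul_eq_mul, one_mul]
      rw [hcomp]
      have hsumle : ∑ k : Fin K, (1 - (P {ω | θstar ∈ C k ω}).toReal) ≤ K * γ := by
        calc ∑ k : Fin K, (1 - (P {ω | θstar ∈ C k ω}).toReal)
            ≤ ∑ _k : Fin K, γ := Finset.sum_le_sum fun k _ => by linarith [hcov k]
          _ = K * γ := by
              rw [Finset.sum_const, Finset.card_univ, Fintype.card_fin, nsmul_eq_mul]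
      have hKR : (0:ℝ) < K := by exact_mod_cast hKpos
      have hfac : (0:ℝ) ≤ (K.factorial : ℝ) := by positivity
      refine mul_le_mul_of_nonneg_right ?_ hfac
      have h1 : (2 / (K:ℝ)) * ∑ k : Fin K, (1 - (P {ω | θstar ∈ C k ω}).toReal)
          ≤ (2 / (K:ℝ)) * ((K:ℝ) * γ) := by
        refine mul_le_mul_of_nonneg_left hsumle (by positivity)
      have h2 : (2 / (K:ℝ)) * ((K:ℝ) * γ) = 2 * γ := by
        field_simp
      linarith
    -- conclude
    have hfacpos : (0:ℝ) < (K.factorial : ℝ) := by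
      exact_mod_cast Nat.factorial_pos K
    calc 1 - 2 * γ
        = ((K.factorial : ℝ))⁻¹ * ((1 - 2 * γ) * (K.factorial : ℝ)) := by
          field_simp
      _ ≤ ((K.factorial : ℝ))⁻¹ *
            ∑ σ : Equiv.Perm (Fin K), (P (X ⁻¹' {x | Q σ x})).toReal :=
          mul_le_mul_of_nonneg_left hkey (by positivity)
      _ = ∑ σ : Equiv.Perm (Fin K),
            ((K.factorial : ℝ))⁻¹ * (P (X ⁻¹' {x | Q σ x})).toReal := Finset.mul_sum _ _ _
  · -- pointwise part
    intro ω θ hθ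
    set klast : Fin K := ⟨K - 1, by omega⟩ with hklast
    have hlast := Set.mem_iInter.mp hθ klast
    simp only [Set.mem_setOf_eq] at hlast ⊢
    have hfilt : Finset.univ.filter (fun j : Fin K => j ≤ klast) = Finset.univ := by
      refine Finset.filter_true_of_mem fun j _ => ?_
      rw [Fin.le_def]
      have := j.isLt
      simp only [hklast]
      omega
    rw [hfilt] at hlast
    have hperm : ∑ j : Fin K, ind (θ ∈ C (π ω j) ω) = ∑ k : Fin K, ind (θ ∈ C k ω) :=
      Equiv.sum_comp (π ω) (fun k => ind (θ ∈ C k ω))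
    rw [hperm] at hlast
    have hcast : (((klast : ℕ) : ℝ) + 1) = (K : ℝ) := by
      simp only [hklast]
      rw [Nat.cast_sub (by omega : 1 ≤ K)]
      ring
    rw [hcast] at hlast
    exact hlast
end

section
/- Let C_1, ..., C_K (K ≥ 2) be random subsets of Θ, each satisfying P(θ_* ∈ C_k) ≥ 1−γ for a fixed θ_* ∈ Θ and γ ∈ (0,1), and let U be uniformly distributed on [0,1], independent of (C_1, ..., C_K). Define C^U = {θ ∈ Θ : (1/K) Σ_{k=1}^K 𝟙(θ ∈ C_k) > U} and C^R = {θ ∈ Θ : (1/K) Σ_{k=1}^K 𝟙(θ ∈ C_k) > (1+U)/2}. Then P(θ_* ∈ C^U) ≥ 1 − γ, and (pointwise, for every outcome) C^R ⊆ C^U. -/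
open MeasureTheory ProbabilityTheory

/-- **Randomized-threshold majority vote `C^U`.** If `C 1, …, C K` (`K ≥ 2`) are random sets
each covering `θ⋆` with probability at least `1 − γ`, and `U` is uniform on `[0,1]`,
independent of the coverage indicators, then
`C^U = {θ : (1/K) Σ_k 𝟙(θ ∈ C k) > U}` covers `θ⋆` with probability at least `1 − γ`,
and pointwise `C^R ⊆ C^U`. -/
theorem randomized_majority_vote_CU
    {Ω Θ : Type*} [MeasurableSpace Ω] (P : Measure Ω) [IsProbabilityMeasure P]
    (K : ℕ) (hK : 2 ≤ K) (C : Fin K → Ω → Set Θ) (θstar : Θ)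
    (γ : ℝ) (hγ : γ ∈ Set.Ioo (0 : ℝ) 1)
    (hmeas : ∀ k, MeasurableSet {ω | θstar ∈ C k ω})
    (hcov : ∀ k, 1 - γ ≤ (P {ω | θstar ∈ C k ω}).toReal)
    (U : Ω → ℝ) (hUmeas : Measurable U)
    (hUunif : P.map U = MeasureTheory.volume.restrict (Set.Icc (0 : ℝ) 1))
    (hUindep : IndepFun U (fun ω => fun k => ind (θstar ∈ C k ω)) P) :
    1 - γ ≤
      (P {ω | (1 / K : ℝ) * ∑ k, ind (θstar ∈ C k ω) > U ω}).toReal ∧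
    ∀ ω : Ω,
      {θ : Θ | (1 / K : ℝ) * ∑ k, ind (θ ∈ C k ω) > (1 + U ω) / 2} ⊆
      {θ : Θ | (1 / K : ℝ) * ∑ k, ind (θ ∈ C k ω) > U ω} := by
  have hK0 : (0:ℝ) < K := by positivity
  have hind_nonneg : ∀ p : Prop, 0 ≤ ind p := by
    intro p; unfold ind; split <;> norm_num
  have hind_le : ∀ p : Prop, ind p ≤ 1 := by
    intro p; unfold ind; split <;> norm_num
  set S : Ω → ℝ := fun ω => (1 / K : ℝ) * ∑ k, ind (θstar ∈ C k ω) with hS_def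
  -- bounds on S and on the generic sums
  have hsum_bounds : ∀ (f : Fin K → Prop),
      0 ≤ (1 / K : ℝ) * ∑ k, ind (f k) ∧ (1 / K : ℝ) * ∑ k, ind (f k) ≤ 1 := by
    intro f
    constructor
    · apply mul_nonneg (by positivity)
      exact Finset.sum_nonneg fun k _ => hind_nonneg _
    · have hsum : (∑ k, ind (f k)) ≤ (K:ℝ) := by
        calc (∑ k, ind (f k)) ≤ ∑ _k : Fin K, (1:ℝ) := Finset.sum_le_sum fun k _ => hind_le _
          _ = K := by simp
      calc (1/(K:ℝ)) * ∑ k, ind (f k) ≤ (1/(K:ℝ)) * K :=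
            mul_le_mul_of_nonneg_left hsum (by positivity)
        _ = 1 := by field_simp
  refine ⟨?_, ?_⟩
  · -- main coverage bound
    have hindk : ∀ k, Measurable (fun ω => ind (θstar ∈ C k ω)) := by
      intro k
      unfold ind
      exact Measurable.ite (hmeas k) measurable_const measurable_const
    have hSmeas : Measurable S := by
      apply Measurable.const_mul
      exact Finset.measurable_sum _ fun k _ => hindk k
    have hindepSU : IndepFun S U P := by
      have := hUindep.symm.comp
        (show Measurable (fun v : Fin K → ℝ => (1 / K : ℝ) * ∑ k, v k) from
          Measurable.const_mul (Finset.measurable_sum _ fun k _ => measurable_pi_apply k) _)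
        measurable_id
      exact this
    have hjoint : P.map (fun ω => (S ω, U ω)) = (P.map S).prod (P.map U) :=
      (indepFun_iff_map_prod_eq_prod_map_map hSmeas.aemeasurable hUmeas.aemeasurable).mp hindepSU
    have hset : MeasurableSet {p : ℝ × ℝ | p.2 < p.1} :=
      measurableSet_lt measurable_snd measurable_fst
    have hPev : P {ω | S ω > U ω} = ((P.map S).prod (P.map U)) {p : ℝ × ℝ | p.2 < p.1} := by
      rw [← hjoint, Measure.map_apply (hSmeas.prodMk hUmeas) hset]
      rfl
    have hslice : ((P.map S).prod (P.map U)) {p : ℝ × ℝ | p.2 < p.1}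
        = ∫⁻ s, (P.map U) (Set.Iio s) ∂(P.map S) := by
      rw [Measure.prod_apply hset]
      rfl
    -- a.e. wrt P.map S, s ∈ [0,1]
    have hSrange : ∀ ω, S ω ∈ Set.Icc (0:ℝ) 1 := fun ω => ⟨(hsum_bounds _).1, (hsum_bounds _).2⟩
    have hae : ∀ᵐ s ∂(P.map S), s ∈ Set.Icc (0:ℝ) 1 := by
      refine (ae_map_iff hSmeas.aemeasurable measurableSet_Icc).mpr ?_
      exact Filter.Eventually.of_forall hSrange
    have hUIio : ∀ s ∈ Set.Icc (0:ℝ) 1, (P.map U) (Set.Iio s) = ENNReal.ofReal s := by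
      intro s hs
      rw [hUunif, Measure.restrict_apply measurableSet_Iio]
      have : Set.Iio s ∩ Set.Icc (0:ℝ) 1 = Set.Ico 0 s := by
        ext x
        simp only [Set.mem_inter_iff, Set.mem_Iio, Set.mem_Icc, Set.mem_Ico]
        constructor
        · rintro ⟨h1, h2, h3⟩; exact ⟨h2, h1⟩
        · rintro ⟨h1, h2⟩; exact ⟨h2, h1, le_trans h2.le hs.2⟩
      rw [this, Real.volume_Ico, sub_zero]
    have hlin : ∫⁻ s, (P.map U) (Set.Iio s) ∂(P.map S) = ∫⁻ s, ENNReal.ofReal s ∂(P.map S) := by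
      apply lintegral_congr_ae
      filter_upwards [hae] with s hs
      exact hUIio s hs
    have hlmap : ∫⁻ s, ENNReal.ofReal s ∂(P.map S) = ∫⁻ ω, ENNReal.ofReal (S ω) ∂P :=
      lintegral_map ENNReal.measurable_ofReal hSmeas
    have hES : ∫⁻ ω, ENNReal.ofReal (S ω) ∂P
        = ENNReal.ofReal (1 / K) * ∑ k, P {ω | θstar ∈ C k ω} := by
      have h1 : ∀ ω, ENNReal.ofReal (S ω)
          = ENNReal.ofReal (1 / K) * ∑ k, ENNReal.ofReal (ind (θstar ∈ C k ω)) := by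
        intro ω
        rw [hS_def]
        rw [ENNReal.ofReal_mul (by positivity), ENNReal.ofReal_sum_of_nonneg]
        intro k _; exact hind_nonneg _
      simp_rw [h1]
      rw [lintegral_const_mul _ (by
        exact Finset.measurable_sum _ fun k _ => (hindk k).ennreal_ofReal)]
      congr 1
      rw [lintegral_finset_sum _ fun k _ => (hindk k).ennreal_ofReal]
      apply Finset.sum_congr rfl
      intro k _
      have hfun : ∀ ω, ENNReal.ofReal (ind (θstar ∈ C k ω))
          = Set.indicator {ω | θstar ∈ C k ω} (fun _ => (1:ENNReal)) ω := by
        intro ω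
        unfold ind
        by_cases h : θstar ∈ C k ω <;> simp [h, Set.indicator]
      rw [lintegral_congr hfun, lintegral_indicator (hmeas k)]
      simp
    have hPk : ∀ k, ENNReal.ofReal (1 - γ) ≤ P {ω | θstar ∈ C k ω} := fun k =>
      ENNReal.ofReal_le_of_le_toReal (hcov k)
    have hfinal : ENNReal.ofReal (1 - γ) ≤ P {ω | S ω > U ω} := by
      rw [hPev, hslice, hlin, hlmap, hES]
      calc ENNReal.ofReal (1 - γ)
          = ENNReal.ofReal (1 / K) * (K * ENNReal.ofReal (1 - γ)) := by
            rw [← mul_assoc]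
            rw [show ((K:ENNReal)) = ENNReal.ofReal (K) by simp, ← ENNReal.ofReal_mul (by positivity)]
            rw [show (1/(K:ℝ)) * K = 1 by field_simp]
            simp
        _ ≤ ENNReal.ofReal (1 / K) * ∑ k, P {ω | θstar ∈ C k ω} := by
            gcongr
            calc (K:ENNReal) * ENNReal.ofReal (1 - γ) = ∑ _k : Fin K, ENNReal.ofReal (1 - γ) := by
                  simp [mul_comm]
              _ ≤ ∑ k, P {ω | θstar ∈ C k ω} := Finset.sum_le_sum fun k _ => hPk k
    have hmono := ENNReal.toReal_mono (measure_ne_top P _) hfinal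
    rw [ENNReal.toReal_ofReal (by linarith [hγ.2])] at hmono
    exact hmono
  · intro ω θ hθ
    simp only [Set.mem_setOf_eq] at hθ ⊢
    have hb := (hsum_bounds (fun k => θ ∈ C k ω)).2
    rcases le_or_gt (U ω) 1 with h | h
    · have : U ω ≤ (1 + U ω) / 2 := by linarith
      linarith
    · exfalso; linarith
end

section
/- Let C_1, ..., C_K (K ≥ 2) be random subsets of Θ, each satisfying P(θ_* ∈ C_k) ≥ 1−γ for a fixed θ_* ∈ Θ and γ ∈ (0,1), let w ∈ [0,1]^K be fixed weights with Σ_{k=1}^K w_k = 1, and let U be uniformly distributed on [0,1], independent of (C_1, ..., C_K). Define the weighted randomized majority-vote set C^W = {θ ∈ Θ : Σ_{k=1}^K w_k 𝟙(θ ∈ C_k) > (1+U)/2}. Then P(θ_* ∈ C^W) ≥ 1 − 2γ. -/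
open MeasureTheory ProbabilityTheory

lemma ind_nonneg (p : Prop) : 0 ≤ ind p := by
  unfold ind; split <;> norm_num

lemma ind_le_one (p : Prop) : ind p ≤ 1 := by
  unfold ind; split <;> norm_num

/-- ofReal of integral is at most lintegral of ofReal, for integrable functions. -/
lemma ofReal_integral_le {α : Type*} [MeasurableSpace α] {μ : Measure α} {f : α → ℝ}
    (hf : Integrable f μ) :
    ENNReal.ofReal (∫ x, f x ∂μ) ≤ ∫⁻ x, ENNReal.ofReal (f x) ∂μ := by
  have h1 : ∫ x, f x ∂μ ≤ ∫ x, max (f x) 0 ∂μ :=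
    integral_mono hf (hf.pos_part) (fun x => le_max_left _ _)
  refine le_trans (ENNReal.ofReal_le_ofReal h1) ?_
  rw [ofReal_integral_eq_lintegral_ofReal hf.pos_part
    (Filter.Eventually.of_forall fun x => le_max_right _ _)]
  refine lintegral_mono fun x => ?_
  rcases le_total (f x) 0 with h | h
  · simp [max_eq_right h, ENNReal.ofReal_eq_zero.2 h]
  · rw [max_eq_left h]

/-- **Weighted randomized majority vote `C^W`.** If `C 1, …, C K` (`K ≥ 2`) are random sets
each covering `θ⋆` with probability at least `1 − γ`, `w ∈ [0,1]^K` are fixed weights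
summing to one, and `U` is uniform on `[0,1]`, independent of the coverage indicators, then
`C^W = {θ : Σ_k w_k 𝟙(θ ∈ C k) > (1+U)/2}` covers `θ⋆` with probability at least `1 − 2γ`. -/
theorem weighted_randomized_majority_vote
    {Ω Θ : Type*} [MeasurableSpace Ω] (P : Measure Ω) [IsProbabilityMeasure P]
    (K : ℕ) (hK : 2 ≤ K) (C : Fin K → Ω → Set Θ) (θstar : Θ)
    (γ : ℝ) (hγ : γ ∈ Set.Ioo (0 : ℝ) 1)
    (hmeas : ∀ k, MeasurableSet {ω | θstar ∈ C k ω})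
    (hcov : ∀ k, 1 - γ ≤ (P {ω | θstar ∈ C k ω}).toReal)
    (w : Fin K → ℝ) (hw : ∀ k, w k ∈ Set.Icc (0 : ℝ) 1) (hwsum : ∑ k, w k = 1)
    (U : Ω → ℝ) (hUmeas : Measurable U)
    (hUunif : P.map U = MeasureTheory.volume.restrict (Set.Icc (0 : ℝ) 1))
    (hUindep : IndepFun U (fun ω => fun k => ind (θstar ∈ C k ω)) P) :
    1 - 2 * γ ≤
      (P {ω | ∑ k, w k * ind (θstar ∈ C k ω) > (1 + U ω) / 2}).toReal := by
  classical
  -- indicator functions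
  set V : Ω → Fin K → ℝ := fun ω k => ind (θstar ∈ C k ω) with hV
  have hIk : ∀ k, (fun ω => ind (θstar ∈ C k ω)) =
      Set.indicator {ω | θstar ∈ C k ω} (fun _ => (1 : ℝ)) := by
    intro k; funext ω
    by_cases h : θstar ∈ C k ω <;> simp [ind, h]
  have hIkmeas : ∀ k, Measurable fun ω => ind (θstar ∈ C k ω) := by
    intro k; rw [hIk k]
    exact (measurable_const.indicator (hmeas k))
  have hVmeas : Measurable V := measurable_pi_lambda _ fun k => hIkmeas k
  -- the sum S
  set S : Ω → ℝ := fun ω => ∑ k, w k * ind (θstar ∈ C k ω) with hS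
  have hSmeas : Measurable S := by
    apply Finset.measurable_sum
    intro k _
    exact (hIkmeas k).const_mul _
  have hS01 : ∀ ω, 0 ≤ S ω ∧ S ω ≤ 1 := by
    intro ω
    constructor
    · exact Finset.sum_nonneg fun k _ => mul_nonneg (hw k).1 (ind_nonneg _)
    · calc S ω ≤ ∑ k, w k := Finset.sum_le_sum fun k _ =>
            mul_le_of_le_one_right (hw k).1 (ind_le_one _)
        _ = 1 := hwsum
  -- the target event as preimage under (U, V)
  set T : Set (ℝ × (Fin K → ℝ)) := {p | (1 + p.1) / 2 < ∑ k, w k * p.2 k} with hT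
  have hTmeas : MeasurableSet T := by
    apply measurableSet_lt
    · exact (measurable_const.add measurable_fst).div_const 2
    · exact Finset.measurable_sum _ fun k _ => ((measurable_pi_apply k).comp measurable_snd).const_mul _
  have hpre : {ω | ∑ k, w k * ind (θstar ∈ C k ω) > (1 + U ω) / 2} =
      (fun ω => (U ω, V ω)) ⁻¹' T := rfl
  have hpair : Measurable fun ω => (U ω, V ω) := hUmeas.prodMk hVmeas
  have hmap : P.map (fun ω => (U ω, V ω)) = (P.map U).prod (P.map V) :=
    (indepFun_iff_map_prod_eq_prod_map_map hUmeas.aemeasurable hVmeas.aemeasurable).1 hUindep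
  -- inner measure computation: for any v with sum s, law of U of the slice
  have hslice : ∀ v : Fin K → ℝ,
      (P.map U) ((fun u => (u, v)) ⁻¹' T) =
        ENNReal.ofReal (min (2 * (∑ k, w k * v k) - 1) 1) := by
    intro v
    have hset : ((fun u => (u, v)) ⁻¹' T) = Set.Iio (2 * (∑ k, w k * v k) - 1) := by
      ext u
      simp only [Set.mem_preimage, hT, Set.mem_setOf_eq, Set.mem_Iio]
      constructor <;> intro h <;> linarith
    rw [hset, hUunif, Measure.restrict_apply measurableSet_Iio]
    set t := 2 * (∑ k, w k * v k) - 1 with ht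
    rcases le_or_gt t 1 with h | h
    · have hset2 : Set.Iio t ∩ Set.Icc (0:ℝ) 1 = Set.Ico 0 t := by
        ext x
        simp only [Set.mem_inter_iff, Set.mem_Iio, Set.mem_Icc, Set.mem_Ico]
        constructor
        · rintro ⟨h1, h2, h3⟩; exact ⟨h2, h1⟩
        · rintro ⟨h1, h2⟩; exact ⟨h2, h1, by linarith⟩
      rw [hset2, Real.volume_Ico, min_eq_left h, sub_zero]
    · have hset2 : Set.Iio t ∩ Set.Icc (0:ℝ) 1 = Set.Icc 0 1 := by
        apply Set.inter_eq_right.2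
        intro x hx
        simp only [Set.mem_Icc] at hx
        exact lt_of_le_of_lt hx.2 h
      rw [hset2, Real.volume_Icc, min_eq_right h.le, sub_zero]
  -- the slice function g
  set g : (Fin K → ℝ) → ENNReal := fun v => ENNReal.ofReal (min (2 * (∑ k, w k * v k) - 1) 1)
    with hg
  have hgmeas : Measurable g := by
    apply ENNReal.measurable_ofReal.comp
    exact (((Finset.measurable_sum _ fun k _ =>
      (measurable_pi_apply k).const_mul _).const_mul 2).sub measurable_const).min
      measurable_const
  -- key identity
  have key : P {ω | ∑ k, w k * ind (θstar ∈ C k ω) > (1 + U ω) / 2} =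
      ∫⁻ ω, ENNReal.ofReal (2 * S ω - 1) ∂P := by
    rw [hpre, ← Measure.map_apply hpair hTmeas, hmap, Measure.prod_apply_symm hTmeas]
    calc ∫⁻ v, (P.map U) ((fun u => (u, v)) ⁻¹' T) ∂(P.map V)
        = ∫⁻ v, g v ∂(P.map V) := lintegral_congr fun v => hslice v
      _ = ∫⁻ ω, g (V ω) ∂P := lintegral_map hgmeas hVmeas
      _ = ∫⁻ ω, ENNReal.ofReal (2 * S ω - 1) ∂P := by
          apply lintegral_congr
          intro ω
          have hmin : min (2 * (∑ k, w k * V ω k) - 1) 1 = 2 * S ω - 1 := by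
            have h1 : (∑ k, w k * V ω k) = S ω := rfl
            rw [h1, min_eq_left (by linarith [(hS01 ω).2])]
          rw [hg]
          simp only [hmin]
  -- integrability and expectation of S
  have hIkint : ∀ k, Integrable (fun ω => ind (θstar ∈ C k ω)) P := by
    intro k
    rw [hIk k]
    exact (integrable_const (1 : ℝ)).indicator (hmeas k)
  have hSint : Integrable S P := by
    apply integrable_finset_sum
    intro k _
    exact (hIkint k).const_mul _
  have hintk : ∀ k, ∫ ω, ind (θstar ∈ C k ω) ∂P = (P {ω | θstar ∈ C k ω}).toReal := by
    intro k
    rw [hIk k, integral_indicator_const _ (hmeas k)]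
    simp; rfl
  have hES : 1 - γ ≤ ∫ ω, S ω ∂P := by
    rw [hS, integral_finset_sum _ (fun k _ => (hIkint k).const_mul _)]
    have : ∀ k ∈ Finset.univ, w k * (1 - γ) ≤ ∫ ω, w k * ind (θstar ∈ C k ω) ∂P := by
      intro k _
      rw [integral_const_mul, hintk k]
      exact mul_le_mul_of_nonneg_left (hcov k) (hw k).1
    calc 1 - γ = ∑ k, w k * (1 - γ) := by rw [← Finset.sum_mul, hwsum, one_mul]
      _ ≤ _ := Finset.sum_le_sum this
  -- lower bound on the measure
  have hfint : Integrable (fun ω => 2 * S ω - 1) P :=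
    (hSint.const_mul 2).sub (integrable_const 1)
  have h2 : ENNReal.ofReal (1 - 2 * γ) ≤
      P {ω | ∑ k, w k * ind (θstar ∈ C k ω) > (1 + U ω) / 2} := by
    rw [key]
    refine le_trans ?_ (ofReal_integral_le hfint)
    apply ENNReal.ofReal_le_ofReal
    rw [integral_sub (hSint.const_mul 2) (integrable_const 1), integral_const_mul,
      integral_const]
    simp only [measure_univ, ENNReal.toReal_one, smul_eq_mul, one_mul, probReal_univ]
    linarith
  rcases le_or_gt (1 - 2 * γ) 0 with h0 | h0
  · exact le_trans h0 ENNReal.toReal_nonneg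
  · exact (ENNReal.ofReal_le_iff_le_toReal (measure_ne_top P _)).1 h2
end

section
/- Let C_1, ..., C_K be random subsets of Θ, each satisfying P(θ_* ∈ C_k) ≥ 1−γ for a fixed θ_* ∈ Θ and γ ∈ (0,1), let w ∈ [0,1]^K be fixed weights with Σ_{k=1}^K w_k = 1, and let t ∈ [0,1) be a fixed threshold. Then the weighted majority-vote set 𝒞(w,t) = {θ ∈ Θ : Σ_{k=1}^K w_k 𝟙(θ ∈ C_k) > t} satisfies P(θ_* ∈ 𝒞(w,t)) ≥ 1 − γ/(1−t). -/
open MeasureTheory ProbabilityTheory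

/-- **Coverage of the weighted majority-vote set.** If each random set `C k` contains `θ⋆`
with probability at least `1 − γ`, `w ∈ [0,1]^K` are fixed weights summing to one and
`t ∈ [0,1)` is a fixed threshold, then `𝒞(w,t) = {θ : Σ_k w_k 𝟙(θ ∈ C k) > t}` contains
`θ⋆` with probability at least `1 − γ/(1 − t)`. -/
theorem weighted_majority_vote_coverage
    {Ω Θ : Type*} [MeasurableSpace Ω] (P : Measure Ω) [IsProbabilityMeasure P]
    (K : ℕ) (C : Fin K → Ω → Set Θ) (θstar : Θ)
    (γ : ℝ) (hγ : γ ∈ Set.Ioo (0 : ℝ) 1)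
    (hmeas : ∀ k, MeasurableSet {ω | θstar ∈ C k ω})
    (hcov : ∀ k, 1 - γ ≤ (P {ω | θstar ∈ C k ω}).toReal)
    (w : Fin K → ℝ) (hw : ∀ k, w k ∈ Set.Icc (0 : ℝ) 1) (hwsum : ∑ k, w k = 1)
    (t : ℝ) (ht : t ∈ Set.Ico (0 : ℝ) 1) :
    1 - γ / (1 - t) ≤
      (P {ω | ∑ k, w k * ind (θstar ∈ C k ω) > t}).toReal := by
  obtain ⟨ht0, ht1⟩ := ht
  have h1t : (0:ℝ) < 1 - t := by linarith
  set A : Fin K → Set Ω := fun k => {ω | θstar ∈ C k ω} with hA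
  have hind : ∀ (k : Fin K) (ω : Ω),
      ind (θstar ∈ C k ω) = (A k).indicator (fun _ => (1:ℝ)) ω := by
    intro k ω
    by_cases h : θstar ∈ C k ω <;> simp [ind, hA, Set.indicator, h]
  have hindc : ∀ (k : Fin K) (ω : Ω),
      (A k)ᶜ.indicator (fun _ => (1:ℝ)) ω = 1 - ind (θstar ∈ C k ω) := by
    intro k ω
    by_cases h : θstar ∈ C k ω <;> simp [ind, hA, Set.indicator, h]
  have hSmeas : Measurable fun ω => ∑ k, w k * ind (θstar ∈ C k ω) := by
    simp only [hind]
    exact Finset.measurable_sum _ fun k _ =>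
      (measurable_const.indicator (hmeas k)).const_mul _
  set E : Set Ω := {ω | ∑ k, w k * ind (θstar ∈ C k ω) > t} with hE
  have hEmeas : MeasurableSet E := measurableSet_lt measurable_const hSmeas
  -- pointwise inequality
  have hpt : ∀ ω, (1 - t) * (Eᶜ).indicator (fun _ => (1:ℝ)) ω
      ≤ ∑ k, w k * (A k)ᶜ.indicator (fun _ => (1:ℝ)) ω := by
    intro ω
    by_cases hω : ω ∈ E
    · rw [Set.indicator_of_notMem (by simpa using hω)]
      refine le_trans (by ring_nf; rfl) (Finset.sum_nonneg fun k _ => ?_)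
      refine mul_nonneg (hw k).1 (Set.indicator_nonneg (fun _ _ => zero_le_one) _)
    · rw [Set.indicator_of_mem (by simpa using hω)]
      have hle : ∑ k, w k * ind (θstar ∈ C k ω) ≤ t := not_lt.mp hω
      have : ∑ k, w k * (A k)ᶜ.indicator (fun _ => (1:ℝ)) ω
          = 1 - ∑ k, w k * ind (θstar ∈ C k ω) := by
        simp only [hindc, mul_sub, Finset.sum_sub_distrib, mul_one, hwsum]
      rw [this]
      linarith
  -- integrability
  have hint : ∀ k : Fin K, Integrable
      (fun ω => w k * (A k)ᶜ.indicator (fun _ => (1:ℝ)) ω) P := by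
    intro k
    exact ((integrable_const (1:ℝ)).indicator (hmeas k).compl).const_mul _
  have hintL : Integrable (fun ω => (1 - t) * (Eᶜ).indicator (fun _ => (1:ℝ)) ω) P :=
    ((integrable_const (1:ℝ)).indicator hEmeas.compl).const_mul _
  have hintR : Integrable (fun ω => ∑ k, w k * (A k)ᶜ.indicator (fun _ => (1:ℝ)) ω) P :=
    integrable_finset_sum _ fun k _ => hint k
  have hmono := integral_mono hintL hintR hpt
  have hLeq : ∫ ω, (1 - t) * (Eᶜ).indicator (fun _ => (1:ℝ)) ω ∂P
      = (1 - t) * (P Eᶜ).toReal := by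
    rw [integral_const_mul, integral_indicator_const _ hEmeas.compl]
    simp [Measure.real]
  have hReq : ∫ ω, (∑ k, w k * (A k)ᶜ.indicator (fun _ => (1:ℝ)) ω) ∂P
      = ∑ k, w k * (P (A k)ᶜ).toReal := by
    rw [integral_finset_sum _ fun k _ => hint k]
    refine Finset.sum_congr rfl fun k _ => ?_
    rw [integral_const_mul, integral_indicator_const _ (hmeas k).compl]
    simp [Measure.real, hA]
  rw [hLeq, hReq] at hmono
  -- bound the right side by γ
  have hcompl : ∀ k : Fin K, (P (A k)ᶜ).toReal = 1 - (P (A k)).toReal := by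
    intro k
    rw [measure_compl (hmeas k) (measure_ne_top _ _), measure_univ,
      ENNReal.toReal_sub_of_le prob_le_one ENNReal.one_ne_top, ENNReal.toReal_one]
  have hRbound : ∑ k, w k * (P (A k)ᶜ).toReal ≤ γ := by
    calc ∑ k, w k * (P (A k)ᶜ).toReal ≤ ∑ k, w k * γ := by
          refine Finset.sum_le_sum fun k _ => mul_le_mul_of_nonneg_left ?_ (hw k).1
          rw [hcompl k]; linarith [hcov k]
      _ = γ := by rw [← Finset.sum_mul, hwsum, one_mul]
  have hEc : (P Eᶜ).toReal ≤ γ / (1 - t) := by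
    rw [le_div_iff₀ h1t, mul_comm]
    exact le_trans hmono hRbound
  have hEcompl : (P E).toReal = 1 - (P Eᶜ).toReal := by
    rw [measure_compl hEmeas (measure_ne_top _ _), measure_univ,
      ENNReal.toReal_sub_of_le prob_le_one ENNReal.one_ne_top, ENNReal.toReal_one]
    ring
  rw [hEcompl]
  linarith
end

section
/- Fix α ∈ (0,1), ϱ > 0 and σ ≥ 0. Then the empirical Bernstein deviation term eventually dominates is characterized as follows: there exists N such that for all integers n ≥ max(N,2), ψ(ϱ, α, n, σ²) ≤ φ(ϱ/2, α, n, 1), if and only if σ < √( ln(1/α) / (4 ln(2/α)) ). -/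
/-- The uniformly-randomized Hoeffding deviation term
`φ(σ,α,n,u) = σ√(2 ln(1/α)/n) + σ ln(u)/√(2 n ln(1/α))`; note `φ(σ,α,n,1)` is the
deterministic Hoeffding deviation term `σ√(2 ln(1/α)/n)`. -/
noncomputable def phi (σ α : ℝ) (n : ℕ) (u : ℝ) : ℝ :=
  σ * Real.sqrt (2 * Real.log (1 / α) / n) +
    σ * Real.log u / Real.sqrt (2 * n * Real.log (1 / α))

/-- The empirical Bernstein deviation term
`ψ(κ,α,n,v) = κ(√(2 v ln(2/α)/n) + 7 ln(2/α)/(3(n−1)))`. -/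
noncomputable def psi (κ α : ℝ) (n : ℕ) (v : ℝ) : ℝ :=
  κ * (Real.sqrt (2 * v * Real.log (2 / α) / n) +
    7 * Real.log (2 / α) / (3 * ((n : ℝ) - 1)))

/-- **Characterization of eventual dominance of the Bernstein term.** For fixed
`α ∈ (0,1)`, `ϱ > 0` and `σ ≥ 0`: there is an `N` such that for all `n ≥ max(N,2)`,
`ψ(ϱ,α,n,σ²) ≤ φ(ϱ/2,α,n,1)`, if and only if `σ < √(ln(1/α)/(4 ln(2/α)))`. -/
theorem bernstein_eventually_dominates_iff
    (α ϱ σ : ℝ) (hα : α ∈ Set.Ioo (0 : ℝ) 1) (hϱ : 0 < ϱ) (hσ : 0 ≤ σ) :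
    (∃ N : ℕ, ∀ n : ℕ, max N 2 ≤ n → psi ϱ α n (σ ^ 2) ≤ phi (ϱ / 2) α n 1) ↔
      σ < Real.sqrt (Real.log (1 / α) / (4 * Real.log (2 / α))) := by
  obtain ⟨hα0, hα1⟩ := hα
  set L1 := Real.log (1 / α) with hL1def
  set L2 := Real.log (2 / α) with hL2def
  have hL1 : 0 < L1 := Real.log_pos (by rw [lt_div_iff₀ hα0]; linarith)
  have hL2 : 0 < L2 := Real.log_pos (by rw [lt_div_iff₀ hα0]; linarith)
  set A := Real.sqrt (2 * L1) with hAdef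
  set B := Real.sqrt (2 * L2) with hBdef
  have hA : 0 < A := Real.sqrt_pos.mpr (by linarith)
  have hB : 0 < B := Real.sqrt_pos.mpr (by linarith)
  have hA2 : A ^ 2 = 2 * L1 := Real.sq_sqrt (by linarith)
  have hB2 : B ^ 2 = 2 * L2 := Real.sq_sqrt (by linarith)
  have key : ∀ n : ℕ, 2 ≤ n →
      (psi ϱ α n (σ ^ 2) ≤ phi (ϱ / 2) α n 1 ↔
        σ * B / Real.sqrt n + 7 * L2 / (3 * ((n : ℝ) - 1)) ≤ A / 2 / Real.sqrt n) := by
    intro n hn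
    have hn2 : (2 : ℝ) ≤ (n : ℝ) := by exact_mod_cast hn
    unfold phi psi
    have e1 : Real.sqrt (2 * L1 / n) = A / Real.sqrt n := by
      rw [Real.sqrt_div (by linarith)]
    have e2 : Real.sqrt (2 * σ ^ 2 * L2 / n) = σ * B / Real.sqrt n := by
      rw [show 2 * σ ^ 2 * L2 / (n : ℝ) = σ ^ 2 * (2 * L2 / n) by ring,
        Real.sqrt_mul (sq_nonneg σ), Real.sqrt_sq hσ, Real.sqrt_div (by linarith)]
      ring
    rw [e1, e2, Real.log_one, mul_zero, zero_div, add_zero,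
      show ϱ / 2 * (A / Real.sqrt n) = ϱ * (A / 2 / Real.sqrt n) by ring]
    exact mul_le_mul_iff_right₀ hϱ
  constructor
  · rintro ⟨N, hN⟩
    set n := max N 2 with hndef
    have hn2 : 2 ≤ n := le_max_right _ _
    have hnr : (2 : ℝ) ≤ (n : ℝ) := by exact_mod_cast hn2
    have h := (key n hn2).mp (hN n le_rfl)
    have hsn : 0 < Real.sqrt n := Real.sqrt_pos.mpr (by linarith)
    have hpos : 0 < 7 * L2 / (3 * ((n : ℝ) - 1)) := by
      apply div_pos (by linarith) (by linarith)
    have hlt : σ * B / Real.sqrt n < A / 2 / Real.sqrt n := by linarith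
    have hσB : σ * B < A / 2 := by
      have := (div_lt_div_iff₀ hsn hsn).mp hlt
      nlinarith
    have hsq : σ ^ 2 < L1 / (4 * L2) := by
      rw [lt_div_iff₀ (by linarith)]
      nlinarith [mul_nonneg hσ hB.le]
    exact (Real.lt_sqrt hσ).mpr hsq
  · intro hlt
    have hsq : σ ^ 2 < L1 / (4 * L2) := (Real.lt_sqrt hσ).mp hlt
    have hsq' : σ ^ 2 * (4 * L2) < L1 := (lt_div_iff₀ (by linarith)).mp hsq
    have hσB : σ * B < A / 2 := by
      apply lt_of_pow_lt_pow_left₀ 2 (by positivity)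
      calc (σ * B) ^ 2 = σ ^ 2 * (2 * L2) := by rw [mul_pow, hB2]
        _ < (A / 2) ^ 2 := by rw [div_pow, hA2]; nlinarith
    set ε := A / 2 - σ * B with hεdef
    have hε0 : 0 < ε := by simp only [hεdef]; linarith
    set C := 14 * L2 / (3 * ε) with hCdef
    have hC : 0 ≤ C := by positivity
    refine ⟨⌈C ^ 2⌉₊, ?_⟩
    intro n hn
    have hn2 : 2 ≤ n := le_trans (le_max_right _ _) hn
    have hnr : (2 : ℝ) ≤ (n : ℝ) := by exact_mod_cast hn2
    have hnN : ⌈C ^ 2⌉₊ ≤ n := le_trans (le_max_left _ _) hn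
    have hCn : C ^ 2 ≤ (n : ℝ) :=
      le_trans (Nat.le_ceil _) (by exact_mod_cast hnN)
    have hCs : C ≤ Real.sqrt n := (Real.le_sqrt hC (by linarith)).mpr hCn
    have hsn : 0 < Real.sqrt n := Real.sqrt_pos.mpr (by linarith)
    have hnsq : Real.sqrt n * Real.sqrt n = (n : ℝ) := Real.mul_self_sqrt (by linarith)
    apply (key n hn2).mpr
    have h14 : 14 * L2 ≤ 3 * ε * Real.sqrt n := by
      have := (div_le_iff₀ (by positivity)).mp hCs
      linarith [this]
    have h1 : 7 * L2 / (3 * ((n : ℝ) - 1)) ≤ 14 * L2 / (3 * (n : ℝ)) := by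
      rw [div_le_div_iff₀ (by linarith) (by linarith)]
      nlinarith
    have h2 : 14 * L2 / (3 * (n : ℝ)) ≤ ε / Real.sqrt n := by
      rw [div_le_div_iff₀ (by linarith) hsn]
      have h3 := mul_le_mul_of_nonneg_right h14 hsn.le
      rw [show 3 * ε * Real.sqrt n * Real.sqrt n
          = 3 * ε * (Real.sqrt n * Real.sqrt n) by ring, hnsq] at h3
      linarith
    have heq : A / 2 / Real.sqrt n = σ * B / Real.sqrt n + ε / Real.sqrt n := by
      rw [hεdef]; ring
    linarith [h1, h2, heq.le]
end

section
/- Fix α ∈ (0,1), ϱ > 0 and σ ≥ 0 with σ < √( ln(1/α) / (4 ln(2/α)) ). Define ς = 7√2·ln(2/α) / ( 3(√(ln(1/α)) − 2σ√(ln(2/α))) ) and N = ⌈ (ς + √(ς² + 4))² / 4 ⌉. Then N ≥ 2 and for every integer n ≥ N, ψ(ϱ, α, n, σ²) ≤ φ(ϱ/2, α, n, 1). -/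
private lemma aux1 (d x L2 s : ℝ) (hs : s * s = 2) (hsp : 0 < s) (hd : 0 < d) (hx : 0 < x) (hL2 : 0 < L2) :
    7 * L2 / (3 * (7 * s * L2 / (3 * d) * x)) = s * d / (2 * x) := by
  have hs0 : s ≠ 0 := hsp.ne'
  field_simp
  nlinarith [hs, hx, hd, hL2, mul_pos hx hd, mul_pos hL2 (mul_pos hx hd)]

private lemma aux2 (l1 l2 s x σ : ℝ) (hx : x ≠ 0) :
    σ * (s * l2) / x + s * (l1 - 2 * σ * l2) / (2 * x) = s * l1 / x / 2 := by
  field_simp; ring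

set_option maxHeartbeats 1000000 in
/-- **Explicit threshold for switching to the Bernstein bound.** Under
`σ < √(ln(1/α)/(4 ln(2/α)))`, with `ς = 7√2 ln(2/α) / (3(√(ln(1/α)) − 2σ√(ln(2/α))))`
and `N = ⌈(ς + √(ς² + 4))²/4⌉`, we have `N ≥ 2` and, for every `n ≥ N`,
`ψ(ϱ,α,n,σ²) ≤ φ(ϱ/2,α,n,1)`. -/
theorem bernstein_threshold
    (α ϱ σ : ℝ) (hα : α ∈ Set.Ioo (0 : ℝ) 1) (hϱ : 0 < ϱ) (hσ : 0 ≤ σ)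
    (hσlt : σ < Real.sqrt (Real.log (1 / α) / (4 * Real.log (2 / α))))
    (ς : ℝ)
    (hς : ς = 7 * Real.sqrt 2 * Real.log (2 / α) /
      (3 * (Real.sqrt (Real.log (1 / α)) - 2 * σ * Real.sqrt (Real.log (2 / α)))))
    (N : ℕ) (hN : N = ⌈(ς + Real.sqrt (ς ^ 2 + 4)) ^ 2 / 4⌉₊) :
    2 ≤ N ∧ ∀ n : ℕ, N ≤ n → psi ϱ α n (σ ^ 2) ≤ phi (ϱ / 2) α n 1 := by
  obtain ⟨hα0, hα1⟩ := hα
  set L1 := Real.log (1 / α) with hL1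
  set L2 := Real.log (2 / α) with hL2
  have hL1pos : 0 < L1 := Real.log_pos (one_lt_one_div hα0 hα1)
  have hL2pos : 0 < L2 := Real.log_pos (by rw [lt_div_iff₀ hα0]; linarith)
  have hsq : σ ^ 2 < L1 / (4 * L2) := by
    have h := Real.sq_sqrt (le_of_lt (by positivity : (0:ℝ) < L1 / (4 * L2)))
    nlinarith [Real.sqrt_nonneg (L1 / (4 * L2))]
  have hsL1 : (Real.sqrt L1) ^ 2 = L1 := Real.sq_sqrt hL1pos.le
  have hsL2 : (Real.sqrt L2) ^ 2 = L2 := Real.sq_sqrt hL2pos.le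
  have hD : 0 < Real.sqrt L1 - 2 * σ * Real.sqrt L2 := by
    have h : 2 * σ * Real.sqrt L2 < Real.sqrt L1 := by
      have h4 : σ ^ 2 * (4 * L2) < L1 := (lt_div_iff₀ (by positivity)).mp hsq
      exact (Real.lt_sqrt (by positivity)).mpr (by nlinarith)
    linarith
  have hςpos : 0 < ς := by rw [hς]; positivity
  have hs2 : Real.sqrt 2 * Real.sqrt 2 = 2 := Real.mul_self_sqrt (by norm_num)
  have hsq4 : Real.sqrt (ς ^ 2 + 4) ≥ 2 := by
    rw [show (2:ℝ) = Real.sqrt 4 by rw [show (4:ℝ) = 2^2 by norm_num, Real.sqrt_sq]; norm_num]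
    exact Real.sqrt_le_sqrt (by nlinarith)
  have hN2 : 2 ≤ N := by
    rw [hN]
    have : (1:ℝ) < (ς + Real.sqrt (ς ^ 2 + 4)) ^ 2 / 4 := by nlinarith
    exact Nat.lt_ceil.mpr (by exact_mod_cast this)
  refine ⟨hN2, fun n hn => ?_⟩
  have hn2 : 2 ≤ n := le_trans hN2 hn
  have hnR : (2:ℝ) ≤ (n:ℝ) := by exact_mod_cast hn2
  set x := Real.sqrt (n:ℝ) with hx
  have hxpos : 0 < x := Real.sqrt_pos.mpr (by linarith)
  have hxsq : x ^ 2 = (n:ℝ) := Real.sq_sqrt (by linarith)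
  -- threshold consequence : ς * x ≤ n - 1
  have hx0 : (ς + Real.sqrt (ς ^ 2 + 4)) / 2 ≤ x := by
    have h1 : (ς + Real.sqrt (ς ^ 2 + 4)) ^ 2 / 4 ≤ (n:ℝ) := by
      have := Nat.le_ceil ((ς + Real.sqrt (ς ^ 2 + 4)) ^ 2 / 4)
      rw [← hN] at this
      calc (ς + Real.sqrt (ς ^ 2 + 4)) ^ 2 / 4 ≤ (N:ℝ) := this
        _ ≤ (n:ℝ) := by exact_mod_cast hn
    have h2 : Real.sqrt ((ς + Real.sqrt (ς ^ 2 + 4)) ^ 2 / 4) ≤ x := Real.sqrt_le_sqrt h1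
    rwa [show (ς + Real.sqrt (ς ^ 2 + 4)) ^ 2 / 4 = ((ς + Real.sqrt (ς ^ 2 + 4)) / 2) ^ 2 by ring,
      Real.sqrt_sq (by positivity)] at h2
  have hkey : ς * x ≤ (n:ℝ) - 1 := by
    have h3 : Real.sqrt (ς ^ 2 + 4) ≤ 2 * x - ς := by linarith
    have h4 : ς ^ 2 + 4 ≤ (2 * x - ς) ^ 2 := by
      nlinarith [Real.sq_sqrt (by positivity : (0:ℝ) ≤ ς ^ 2 + 4), Real.sqrt_nonneg (ς ^ 2 + 4)]
    have h5 : (2 * x - ς) ^ 2 = 4 * x ^ 2 - 4 * (x * ς) + ς ^ 2 := by ring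
    have h6 : ς * x = x * ς := by ring
    linarith [h4, h5, hxsq]
  -- rewrite sqrt terms
  have hsA : Real.sqrt (2 * σ ^ 2 * L2 / (n:ℝ)) = σ * (Real.sqrt 2 * Real.sqrt L2) / x := by
    rw [show 2 * σ ^ 2 * L2 / (n:ℝ) = σ ^ 2 * (2 * L2 / (n:ℝ)) by ring,
      Real.sqrt_mul (sq_nonneg σ), Real.sqrt_sq hσ,
      Real.sqrt_div (by positivity) (n:ℝ), Real.sqrt_mul (by norm_num : (0:ℝ) ≤ 2)]
    ring
  have hsB : Real.sqrt (2 * L1 / (n:ℝ)) = Real.sqrt 2 * Real.sqrt L1 / x := by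
    rw [Real.sqrt_div (by positivity) (n:ℝ), Real.sqrt_mul (by norm_num : (0:ℝ) ≤ 2)]
  have hn1 : (0:ℝ) < (n:ℝ) - 1 := by linarith
  -- the main inequality
  have hkey2 : 7 * L2 / (3 * ((n:ℝ) - 1)) ≤
      Real.sqrt 2 * (Real.sqrt L1 - 2 * σ * Real.sqrt L2) / (2 * x) := by
    have step1 : 7 * L2 / (3 * ((n:ℝ) - 1)) ≤ 7 * L2 / (3 * (ς * x)) := by
      apply div_le_div_of_nonneg_left (by positivity) (by positivity) (by linarith)
    have step2 : 7 * L2 / (3 * (ς * x)) =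
        Real.sqrt 2 * (Real.sqrt L1 - 2 * σ * Real.sqrt L2) / (2 * x) := by
      rw [hς, mul_comm (7 * Real.sqrt 2 * L2 / (3 * (Real.sqrt L1 - 2 * σ * Real.sqrt L2))) x]
      rw [show 7 * Real.sqrt 2 * L2 = 7 * Real.sqrt 2 * L2 from rfl]
      have := aux1 (Real.sqrt L1 - 2 * σ * Real.sqrt L2) x L2 (Real.sqrt 2) hs2 (Real.sqrt_pos.mpr (by norm_num)) hD hxpos hL2pos
      rw [show 7 * Real.sqrt 2 * L2 / (3 * (Real.sqrt L1 - 2 * σ * Real.sqrt L2)) =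
        7 * Real.sqrt 2 * L2 / (3 * (Real.sqrt L1 - 2 * σ * Real.sqrt L2)) from rfl]
      rw [mul_comm x]
      exact this
    linarith [step1, step2.le, step2.ge]
  have heq : σ * (Real.sqrt 2 * Real.sqrt L2) / x +
      Real.sqrt 2 * (Real.sqrt L1 - 2 * σ * Real.sqrt L2) / (2 * x) =
      Real.sqrt 2 * Real.sqrt L1 / x / 2 :=
    aux2 (Real.sqrt L1) (Real.sqrt L2) (Real.sqrt 2) x σ hxpos.ne'
  have hA : σ * (Real.sqrt 2 * Real.sqrt L2) / x + 7 * L2 / (3 * ((n:ℝ) - 1)) ≤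
      Real.sqrt 2 * Real.sqrt L1 / x / 2 := by linarith
  -- finish
  unfold psi phi
  rw [Real.log_one, ← hL1, ← hL2, hsA, hsB]
  have : ϱ / 2 * (Real.sqrt 2 * Real.sqrt L1 / x) = ϱ * (Real.sqrt 2 * Real.sqrt L1 / x / 2) := by ring
  rw [this]
  have := mul_le_mul_of_nonneg_left hA hϱ.le
  simp only [mul_zero, zero_div, add_zero]
  linarith
end

section
/- Let Θ be the set of functions ℝ^d → ℝ, let f_* ∈ Θ be fixed, and let C_1, ..., C_K (K ≥ 2) be random subsets of Θ with P(f_* ∈ C_k) ≥ 1−γ for each k, where γ ∈ (0,1). For each k define the band hull D_k = { f ∈ Θ : ∀x ∈ ℝ^d, inf_{g ∈ C_k} g(x) ≤ f(x) ≤ sup_{g ∈ C_k} g(x) } (pointwise, per outcome). Then: (i) C_k ⊆ D_k for every k and every outcome; (ii) for any weights w ∈ [0,1]^K with Σ_k w_k = 1 and any threshold t ∈ [0,1), Σ_k w_k 𝟙(f ∈ C_k) ≤ Σ_k w_k 𝟙(f ∈ D_k) for all f ∈ Θ, so the weighted majority-vote set of the C_k's is contained in that of the D_k's; and (iii) the majority-vote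 set D^M = { f ∈ Θ : (1/K) Σ_{k=1}^K 𝟙(f ∈ D_k) > 1/2 } satisfies P(f_* ∈ D^M) ≥ 1 − 2γ, i.e., the per-input merged confidence intervals retain a simultaneous coverage guarantee. -/
open MeasureTheory ProbabilityTheory

lemma ind_mono {p q : Prop} (h : p → q) : ind p ≤ ind q := by
  unfold ind; split_ifs with h1 h2 <;> simp_all

lemma ind_add_not (p : Prop) : ind p + ind (¬ p) = 1 := by
  unfold ind; by_cases h : p <;> simp [h]

lemma ind_eq_indicator {Ω : Type*} (s : Set Ω) (ω : Ω) :
    ind (ω ∈ s) = s.indicator (fun _ => (1:ℝ)) ω := by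
  unfold ind; by_cases h : ω ∈ s <;> simp [h, Set.indicator]

/-- **Per-input merged confidence intervals retain simultaneous coverage.** Let
`C 1, …, C K` (`K ≥ 2`) be random sets of functions `ℝ^d → ℝ`, each containing `f⋆` with
probability at least `1 − γ`, and let `D k` be the band hull of `C k`:
`D k = {f : ∀ x, inf_{g ∈ C k} g(x) ≤ f(x) ≤ sup_{g ∈ C k} g(x)}` (inf/sup in the extended
reals). Then (i) `C k ⊆ D k` pointwise; (ii) any weighted majority vote of the `C k`'s is
dominated by that of the `D k`'s, so the corresponding majority-vote sets are nested; and
(iii) the majority-vote set of the `D k`'s contains `f⋆` with probability at least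
`1 − 2γ`. -/
theorem band_hull_majority_vote
    {Ω : Type*} [MeasurableSpace Ω] (P : Measure Ω) [IsProbabilityMeasure P]
    (d K : ℕ) (hK : 2 ≤ K)
    (C : Fin K → Ω → Set ((Fin d → ℝ) → ℝ)) (fstar : (Fin d → ℝ) → ℝ)
    (γ : ℝ) (hγ : γ ∈ Set.Ioo (0 : ℝ) 1)
    (hCmeas : ∀ k, MeasurableSet {ω | fstar ∈ C k ω})
    (hcov : ∀ k, 1 - γ ≤ (P {ω | fstar ∈ C k ω}).toReal)
    (D : Fin K → Ω → Set ((Fin d → ℝ) → ℝ))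
    (hD : ∀ k ω, D k ω = {f | ∀ x : Fin d → ℝ,
      (⨅ g : C k ω, ((g.1 x : EReal))) ≤ (f x : EReal) ∧
      (f x : EReal) ≤ ⨆ g : C k ω, ((g.1 x : EReal))})
    (hDmeas : ∀ k, MeasurableSet {ω | fstar ∈ D k ω}) :
    (∀ k ω, C k ω ⊆ D k ω) ∧
    (∀ (w : Fin K → ℝ), (∀ k, w k ∈ Set.Icc (0 : ℝ) 1) → ∑ k, w k = 1 →
      ∀ t ∈ Set.Ico (0 : ℝ) 1,
        (∀ (f : (Fin d → ℝ) → ℝ) (ω : Ω),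
          ∑ k, w k * ind (f ∈ C k ω) ≤ ∑ k, w k * ind (f ∈ D k ω)) ∧
        (∀ ω : Ω,
          {f : (Fin d → ℝ) → ℝ | ∑ k, w k * ind (f ∈ C k ω) > t} ⊆
          {f : (Fin d → ℝ) → ℝ | ∑ k, w k * ind (f ∈ D k ω) > t})) ∧
    (1 - 2 * γ ≤
      (P {ω | (1 / K : ℝ) * ∑ k, ind (fstar ∈ D k ω) > 1 / 2}).toReal) := by
  have hKpos : (0:ℝ) < K := by
    have : (0:ℕ) < K := by omega
    exact_mod_cast this
  have hsub : ∀ k ω, C k ω ⊆ D k ω := by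
    intro k ω f hf
    rw [hD]
    intro x
    exact ⟨iInf_le (fun g : C k ω => ((g.1 x : EReal))) ⟨f, hf⟩,
           le_iSup (fun g : C k ω => ((g.1 x : EReal))) ⟨f, hf⟩⟩
  refine ⟨hsub, ?_, ?_⟩
  · intro w hw hw1 t ht
    have hsum : ∀ (f : (Fin d → ℝ) → ℝ) (ω : Ω),
        ∑ k, w k * ind (f ∈ C k ω) ≤ ∑ k, w k * ind (f ∈ D k ω) := by
      intro f ω
      refine Finset.sum_le_sum fun k _ => ?_
      exact mul_le_mul_of_nonneg_left (ind_mono (fun h => hsub k ω h)) (hw k).1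
    exact ⟨hsum, fun ω f hf => lt_of_lt_of_le hf (hsum f ω)⟩
  · set A : Fin K → Set Ω := fun k => {ω | fstar ∈ D k ω} with hA
    set E : Set Ω := {ω | (1 / K : ℝ) * ∑ k, ind (fstar ∈ D k ω) > 1 / 2} with hE
    have hEmeas : MeasurableSet E := by
      have hm : Measurable fun ω => ∑ k, ind (fstar ∈ D k ω) := by
        apply Finset.measurable_sum
        intro k _
        have : (fun ω => ind (fstar ∈ D k ω))
            = (A k).indicator (fun _ => (1:ℝ)) := by
          funext ω; exact ind_eq_indicator (A k) ω
        rw [this]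
        exact (measurable_const).indicator (hDmeas k)
      exact measurableSet_lt measurable_const (hm.const_mul _)
    have probcompl : ∀ (s : Set Ω), MeasurableSet s →
        (P sᶜ).toReal = 1 - (P s).toReal := by
      intro s hs
      rw [measure_compl hs (measure_ne_top _ _), measure_univ,
        ENNReal.toReal_sub_of_le prob_le_one ENNReal.one_ne_top, ENNReal.toReal_one]
    -- failure probabilities for each A k
    have hAcov : ∀ k, (P (A k)ᶜ).toReal ≤ γ := by
      intro k
      have h1 : P {ω | fstar ∈ C k ω} ≤ P (A k) :=
        measure_mono (fun ω hω => hsub k ω hω)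
    -- toReal mono
      have h2 : (P {ω | fstar ∈ C k ω}).toReal ≤ (P (A k)).toReal :=
        ENNReal.toReal_mono (measure_ne_top _ _) h1
      rw [probcompl _ (hDmeas k)]
      have := hcov k
      linarith
    -- pointwise: indicator of Eᶜ ≤ g
    set g : Ω → ℝ := fun ω => (2 / K) * ∑ k, ind (fstar ∉ D k ω) with hg
    have hpt : ∀ ω, Eᶜ.indicator (fun _ => (1:ℝ)) ω ≤ g ω := by
      intro ω
      by_cases hω : ω ∈ Eᶜ
      · rw [Set.indicator_of_mem hω]
        have hle : (1 / K : ℝ) * ∑ k, ind (fstar ∈ D k ω) ≤ 1 / 2 := not_lt.mp hω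
        have hsumK : (∑ k, ind (fstar ∈ D k ω)) + (∑ k, ind (fstar ∉ D k ω)) = K := by
          rw [← Finset.sum_add_distrib]
          have : ∀ k : Fin K, ind (fstar ∈ D k ω) + ind (fstar ∉ D k ω) = 1 :=
            fun k => ind_add_not _
          simp [this]
        have hS : ∑ k, ind (fstar ∈ D k ω) ≤ K / 2 := by
          have h := mul_le_mul_of_nonneg_left hle (le_of_lt hKpos)
          have heq : (K:ℝ) * ((1/K) * ∑ k, ind (fstar ∈ D k ω))
              = ∑ k, ind (fstar ∈ D k ω) := by field_simp
          rw [heq] at h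
          linarith
        have hNS : (K:ℝ) / 2 ≤ ∑ k, ind (fstar ∉ D k ω) := by linarith
        calc (1:ℝ) = (2 / K) * ((K:ℝ)/2) := by field_simp
          _ ≤ g ω := by
              apply mul_le_mul_of_nonneg_left hNS
              positivity
      · rw [Set.indicator_of_notMem hω]
        apply mul_nonneg (by positivity)
        exact Finset.sum_nonneg fun k _ => ind_nonneg _
    -- integrability
    have hint : ∀ k : Fin K, Integrable ((A k)ᶜ.indicator (fun _ => (1:ℝ))) P := by
      intro k
      exact (integrable_const (1:ℝ)).indicator (hDmeas k).compl
    have hgeq : g = fun ω => ∑ k, (2 / K) * (A k)ᶜ.indicator (fun _ => (1:ℝ)) ω := by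
      funext ω
      show (2 / (K:ℝ)) * ∑ k, ind (fstar ∉ D k ω) = _
      rw [Finset.mul_sum]
      refine Finset.sum_congr rfl fun k _ => ?_
      congr 1
    have hgint : Integrable g P := by
      rw [hgeq]
      exact integrable_finset_sum _ (fun k _ => (hint k).const_mul _)
    have hEint : Integrable (Eᶜ.indicator (fun _ => (1:ℝ))) P :=
      (integrable_const (1:ℝ)).indicator hEmeas.compl
    have hint1 : ∫ ω, Eᶜ.indicator (fun _ => (1:ℝ)) ω ∂P ≤ ∫ ω, g ω ∂P :=
      integral_mono hEint hgint hpt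
    have hIE : ∫ ω, Eᶜ.indicator (fun _ => (1:ℝ)) ω ∂P = (P Eᶜ).toReal := by
      rw [integral_indicator_const _ hEmeas.compl]; simp; rfl
    have hIg : ∫ ω, g ω ∂P = (2 / K) * ∑ k, (P (A k)ᶜ).toReal := by
      rw [hgeq, integral_finset_sum _ (fun k _ => (hint k).const_mul _)]
      rw [Finset.mul_sum]
      congr 1; funext k
      rw [MeasureTheory.integral_const_mul, integral_indicator_const _ (hDmeas k).compl]
      simp; left; rfl
    have hsumγ : ∑ k : Fin K, (P (A k)ᶜ).toReal ≤ K * γ := by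
      calc ∑ k : Fin K, (P (A k)ᶜ).toReal ≤ ∑ _k : Fin K, γ :=
            Finset.sum_le_sum fun k _ => hAcov k
        _ = K * γ := by simp [Finset.sum_const, mul_comm]
    have hPEc : (P Eᶜ).toReal ≤ 2 * γ := by
      have : (P Eᶜ).toReal ≤ (2 / K) * ((K:ℝ) * γ) := by
        rw [← hIE]
        refine hint1.trans ?_
        rw [hIg]
        apply mul_le_mul_of_nonneg_left hsumγ
        positivity
      calc (P Eᶜ).toReal ≤ (2 / K) * ((K:ℝ) * γ) := this
        _ = 2 * γ := by field_simp
    have hPE : 1 - (P E).toReal = (P Eᶜ).toReal := by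
      rw [probcompl _ hEmeas]
    show 1 - 2 * γ ≤ (P E).toReal
    linarith
end
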